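/- arXiv:math/0106074 — 7 statements merged into one kernel-verified Lean document; each statement's English description precedes it below -/
import Mathlib

section
/- For any real t > 0, the sum over integers r ≥ 0 of (r+1)·t^{r+1} / (t)_{r+2} equals 1, where (t)_n = t(t+1)···(t+n-1) is the Pochhammer symbol. -/
/-- The Pochhammer symbol `(x)_n = x(x+1)⋯(x+n-1)`. -/
noncomputable def poch (x : ℝ) (n : ℕ) : ℝ := ∏ i ∈ Finset.range n, (x + i)

lemma poch_pos (t : ℝ) (ht : 0 < t) (n : ℕ) : 0 < poch t n := by
  unfold poch
  exact Finset.prod_pos fun i _ => by positivity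

lemma poch_succ (t : ℝ) (n : ℕ) : poch t (n + 1) = poch t n * (t + n) := by
  unfold poch
  exact Finset.prod_range_succ _ _

theorem stmt0 (t : ℝ) (ht : 0 < t) :
    ∑' r : ℕ, ((r : ℝ) + 1) * t ^ (r + 1) / poch t (r + 2) = 1 := by
  set a : ℕ → ℝ := fun n => t ^ (n + 1) / poch t (n + 1) with ha
  have hpos := poch_pos t ht
  have hterm : ∀ r : ℕ, ((r : ℝ) + 1) * t ^ (r + 1) / poch t (r + 2) = a r - a (r + 1) := by
    intro r
    have h2 : poch t (r + 2) = poch t (r + 1) * (t + (r + 1 : ℕ)) := poch_succ t (r + 1)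
    have hp1 := hpos (r + 1)
    have hp2 := hpos (r + 2)
    simp only [ha]
    rw [h2]
    push_cast
    field_simp
    ring
  have hbound : ∀ n : ℕ, a n ≤ (t / (t + 1)) ^ n := by
    intro n
    induction n with
    | zero =>
      simp [ha, poch, Finset.prod_range_one]
      rw [div_le_one ht]
    | succ n ih =>
      have hp1 := hpos (n + 1)
      have : a (n + 1) = a n * (t / (t + (n + 1 : ℕ))) := by
        simp only [ha, poch_succ t (n + 1)]
        field_simp
        ring
      rw [this, pow_succ]
      have h1 : t / (t + (n + 1 : ℕ)) ≤ t / (t + 1) := by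
        apply div_le_div_of_nonneg_left ht.le (by linarith)
        push_cast; linarith [Nat.cast_nonneg (α := ℝ) n]
      have h2 : 0 ≤ a n := by
        exact div_nonneg (by positivity) (hpos _).le
      have h3 : 0 ≤ t / (t + (n + 1 : ℕ)) := by positivity
      exact mul_le_mul ih h1 h3 (by positivity)
  have hanonneg : ∀ n, 0 ≤ a n := fun n => by exact div_nonneg (by positivity) (hpos _).le
  have hatend : Filter.Tendsto a Filter.atTop (nhds 0) := by
    apply squeeze_zero hanonneg hbound
    apply tendsto_pow_atTop_nhds_zero_of_lt_one (by positivity)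
    rw [div_lt_one (by linarith)]; linarith
  have hsum : HasSum (fun r : ℕ => ((r : ℝ) + 1) * t ^ (r + 1) / poch t (r + 2)) 1 := by
    rw [hasSum_iff_tendsto_nat_of_nonneg (fun r => div_nonneg (by positivity) (hpos _).le)]
    have : ∀ n : ℕ, ∑ r ∈ Finset.range n, ((r : ℝ) + 1) * t ^ (r + 1) / poch t (r + 2)
        = a 0 - a n := by
      intro n
      rw [← Finset.sum_range_sub' a n]
      exact Finset.sum_congr rfl fun r _ => hterm r
    simp only [this]
    have ha0 : a 0 = 1 := by
      simp [ha, poch, Finset.prod_range_one]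
      exact ht.ne'
    rw [ha0]
    simpa using (tendsto_const_nhds.sub hatend)
  exact hsum.tsum_eq
end

section
/- For any real t > 0 and integer l ≥ 1, the integral from 0 to 1 of (1-v)^{t-1}·v^l·exp(t·(v + v²/2 + ··· + v^l/l)) dv equals 1/t. -/
/-- `y l v = v + v²/2 + ⋯ + v^l/l`. -/
noncomputable def y (l : ℕ) (v : ℝ) : ℝ := ∑ i ∈ Finset.range l, v ^ (i + 1) / (i + 1)

lemma y_hasDerivAt (l : ℕ) (v : ℝ) :
    HasDerivAt (y l) (∑ i ∈ Finset.range l, v ^ i) v := by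
  have h : ∀ i ∈ Finset.range l,
      HasDerivAt (fun v : ℝ => v ^ (i + 1) / (i + 1)) (v ^ i) v := by
    intro i _
    have h := (hasDerivAt_pow (i + 1) v).div_const ((i : ℝ) + 1)
    have hne : ((i : ℝ) + 1) ≠ 0 := by positivity
    convert h using 1
    case e'_9 =>
      push_cast
      field_simp
    all_goals rfl
  have := HasDerivAt.fun_sum h
  exact this

lemma y_le (l : ℕ) {v : ℝ} (h0 : 0 ≤ v) (h1 : v ≤ 1) : y l v ≤ y l 1 := by
  unfold y
  apply Finset.sum_le_sum
  intro i _
  apply div_le_div_of_nonneg_right ?_ (by positivity)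
  · simpa using pow_le_one₀ h0 h1

theorem stmt2 (t : ℝ) (ht : 0 < t) (l : ℕ) (hl : 1 ≤ l) :
    ∫ v in (0:ℝ)..1, (1 - v) ^ (t - 1) * v ^ l * Real.exp (t * y l v) = 1 / t := by
  set g : ℝ → ℝ := fun v => (1 - v) ^ (t - 1) * v ^ l * Real.exp (t * y l v) with hg
  set F : ℝ → ℝ := fun v => -(1 / t) * ((1 - v) ^ t * Real.exp (t * y l v)) with hFdef
  have hyc : Continuous (fun v : ℝ => Real.exp (t * y l v)) := by
    apply Real.continuous_exp.comp
    apply Continuous.mul continuous_const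
    apply continuous_finset_sum
    intro i _
    exact (continuous_pow (i + 1)).div_const _
  have hcont : ContinuousOn F (Set.Icc 0 1) := by
    apply Continuous.continuousOn
    apply Continuous.mul continuous_const
    apply Continuous.mul
    · exact (continuous_const.sub continuous_id).rpow_const (fun x => Or.inr ht.le)
    · exact hyc
  have hderiv : ∀ v ∈ Set.Ioo (0:ℝ) 1, HasDerivAt F (g v) v := by
    intro v hv
    have hv1 : (0:ℝ) < 1 - v := by linarith [hv.2]
    have h1 : HasDerivAt (fun v : ℝ => (1 - v) ^ t) (-1 * t * (1 - v) ^ (t - 1)) v :=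
      HasDerivAt.rpow_const ((hasDerivAt_id v).const_sub 1) (Or.inl hv1.ne')
    have h2 : HasDerivAt (fun v : ℝ => Real.exp (t * y l v))
        (t * (∑ i ∈ Finset.range l, v ^ i) * Real.exp (t * y l v)) v := by
      have := ((y_hasDerivAt l v).const_mul t).exp
      simpa [mul_comm, mul_assoc, mul_left_comm] using this
    have h3 := (h1.mul h2).const_mul (-(1 / t))
    set S : ℝ := ∑ i ∈ Finset.range l, v ^ i with hS
    set E : ℝ := Real.exp (t * y l v) with hE
    set A : ℝ := (1 - v) ^ (t - 1) with hA
    have hgeom : (1:ℝ) - (1 - v) * S = v ^ l := by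
      have := geom_sum_mul v l
      rw [hS]
      nlinarith [this]
    have hpow : (1 - v) ^ t = A * (1 - v) := by
      rw [hA, ← Real.rpow_add_one hv1.ne' (t - 1)]
      ring_nf
    have key : -(1 / t) * ((-1 * t * A) * E + (1 - v) ^ t * (t * S * E)) = g v := by
      rw [hpow]
      simp only [hg]
      rw [← hE, ← hA, ← hgeom]
      field_simp
      ring
    rw [← key]
    exact h3
  have hint : IntervalIntegrable g MeasureTheory.volume 0 1 := by
    have hbase : IntervalIntegrable (fun v : ℝ => (1 - v) ^ (t - 1))
        MeasureTheory.volume 0 1 := by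
      have := (intervalIntegral.intervalIntegrable_rpow' (r := t - 1)
        (by linarith) (a := 0) (b := 1)).comp_sub_left 1
      simpa using this.symm
    rw [intervalIntegrable_iff_integrableOn_Ioo_of_le (by norm_num)] at hbase ⊢
    set C : ℝ := Real.exp (t * y l 1) with hC
    apply MeasureTheory.Integrable.mono' (hbase.const_mul C)
    · apply ContinuousOn.aestronglyMeasurable ?_ measurableSet_Ioo
      apply ContinuousOn.mul (ContinuousOn.mul ?_ (continuous_pow l).continuousOn)
        hyc.continuousOn
      apply ContinuousOn.rpow_const (continuous_const.sub continuous_id).continuousOn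
      intro x hx
      exact Or.inl (by simp; linarith [hx.2])
    · filter_upwards [MeasureTheory.ae_restrict_mem measurableSet_Ioo] with v hv
      have h0 : (0:ℝ) ≤ 1 - v := by linarith [hv.2]
      have hr : (0:ℝ) ≤ (1 - v) ^ (t - 1) := Real.rpow_nonneg h0 _
      have hvl : v ^ l ≤ 1 := pow_le_one₀ hv.1.le hv.2.le
      have hexp : Real.exp (t * y l v) ≤ C := by
        rw [hC]
        exact Real.exp_le_exp.mpr (mul_le_mul_of_nonneg_left (y_le l hv.1.le hv.2.le) ht.le)
      have hgnn : 0 ≤ g v :=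
        mul_nonneg (mul_nonneg hr (pow_nonneg hv.1.le l)) (Real.exp_pos _).le
      rw [Real.norm_of_nonneg hgnn, hg]
      calc (1 - v) ^ (t - 1) * v ^ l * Real.exp (t * y l v)
          ≤ (1 - v) ^ (t - 1) * 1 * C := by
            apply mul_le_mul (mul_le_mul le_rfl hvl (pow_nonneg hv.1.le l) hr) hexp
              (Real.exp_pos _).le (mul_nonneg hr zero_le_one)
        _ = C * (1 - v) ^ (t - 1) := by ring
  have := intervalIntegral.integral_eq_sub_of_hasDeriv_right_of_le (by norm_num) hcont
    (fun x hx => (hderiv x hx).hasDerivWithinAt) hint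
  rw [this]
  have hy0 : y l 0 = 0 := by simp [y]
  simp [hFdef, Real.zero_rpow ht.ne', hy0]
end

section
/- Let k ≥ 1 and let p₁ > p₂ > ⋯ > p_k ≥ 1 be integers, with the convention p_{k+1} = 0 and p_r = 0 for r > k+1. Then ∏_{1≤i<j≤k} [ (p_i - p_j) · (p_i - p_{j-1} + 1)_{p_{j-1} - p_{j+1} - 1} ] · ∏_{i=1}^{k} (p_i - p_{i+1} - 1)! · (p_i - p_k + 1)_{p_k + 1} = ∏_{i=1}^{k} (p_i - 1)!·(p_i + 1)!. -/
/-- Pochhammer symbol for natural arguments: `(a)_n = a(a+1)⋯(a+n-1)`. -/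
def pochN (a n : ℕ) : ℕ := ∏ i ∈ Finset.range n, (a + i)

lemma fact_mul_pochN (a n : ℕ) :
    a.factorial * pochN (a + 1) n = (a + n).factorial := by
  induction n with
  | zero => simp [pochN]
  | succ n ih =>
    rw [pochN, Finset.prod_range_succ, ← pochN, ← mul_assoc, ih,
      show a + (n + 1) = (a + n) + 1 by ring, Nat.factorial_succ]
    ring

theorem stmt8 (k : ℕ) (hk : 1 ≤ k) (p : ℕ → ℕ)
    (hdec : ∀ i, 1 ≤ i → i < k → p (i + 1) < p i)
    (hpk : 1 ≤ p k)
    (hconv : ∀ r, k + 1 ≤ r → p r = 0) :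
    (∏ i ∈ Finset.Icc 1 k, ∏ j ∈ Finset.Icc (i + 1) k,
        (p i - p j) * pochN (p i - p (j - 1) + 1) (p (j - 1) - p (j + 1) - 1)) *
      ∏ i ∈ Finset.Icc 1 k,
        Nat.factorial (p i - p (i + 1) - 1) * pochN (p i - p k + 1) (p k + 1)
    = ∏ i ∈ Finset.Icc 1 k, Nat.factorial (p i - 1) * Nat.factorial (p i + 1) := by
  have hle : ∀ a b, 1 ≤ a → a ≤ b → b ≤ k → p b ≤ p a := by
    intro a b ha hab
    induction b, hab using Nat.le_induction with
    | base => intro _; exact le_rfl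
    | succ b hb ih =>
      intro hbk
      exact le_trans (le_of_lt (hdec b (le_trans ha hb) (by omega))) (ih (by omega))
  have hlt : ∀ a b, 1 ≤ a → a < b → b ≤ k → p b < p a := by
    intro a b ha hab hbk
    exact lt_of_le_of_lt (hle (a + 1) b (by omega) hab hbk) (hdec a ha (by omega))
  rw [← Finset.prod_mul_distrib]
  refine Finset.prod_congr rfl ?_
  intro i hi
  simp only [Finset.mem_Icc] at hi
  obtain ⟨hi1, hik⟩ := hi
  have key : ∀ m, i ≤ m → m ≤ k →
      (∏ j ∈ Finset.Icc (i + 1) m,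
          (p i - p j) * pochN (p i - p (j - 1) + 1) (p (j - 1) - p (j + 1) - 1)) *
        Nat.factorial (p i - p (i + 1) - 1)
      = Nat.factorial (p i - p m) * Nat.factorial (p i - p (m + 1) - 1) := by
    intro m him
    induction m, him using Nat.le_induction with
    | base =>
      intro _
      rw [Finset.Icc_eq_empty (by omega), Finset.prod_empty]
      simp [Nat.sub_self]
    | succ m hm ih =>
      intro hmk
      have ih' := ih (by omega)
      have h1 : p (m + 1) < p m := hdec m (by omega) (by omega)
      have h2 : p m ≤ p i := hle i m hi1 hm (by omega)
      have h3 : p (m + 2) + 1 ≤ p m := by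
        by_cases hc : m + 2 ≤ k
        · have := hlt m (m + 2) (by omega) (by omega) hc
          omega
        · have hz : p (m + 2) = 0 := hconv (m + 2) (by omega)
          have : p k ≤ p m := hle m k (by omega) (by omega) le_rfl
          omega
      have e1 : Nat.factorial (p i - p m) *
          pochN (p i - p m + 1) (p m - p (m + 2) - 1)
          = Nat.factorial (p i - p (m + 2) - 1) := by
        rw [fact_mul_pochN]
        congr 1
        omega
      have e2 : (p i - p (m + 1)) * Nat.factorial (p i - p (m + 1) - 1)
          = Nat.factorial (p i - p (m + 1)) := by
        have h4 : 1 ≤ p i - p (m + 1) := by omega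
        obtain ⟨t, ht⟩ : ∃ t, p i - p (m + 1) = t + 1 :=
          ⟨_, (Nat.succ_pred_eq_of_pos h4).symm⟩
        rw [ht]
        simp [Nat.factorial_succ]
      rw [Finset.prod_Icc_succ_top (by omega)]
      simp only [Nat.add_sub_cancel, show m + 1 + 1 = m + 2 by omega]
      calc (∏ j ∈ Finset.Icc (i + 1) m,
              (p i - p j) * pochN (p i - p (j - 1) + 1) (p (j - 1) - p (j + 1) - 1)) *
            ((p i - p (m + 1)) * pochN (p i - p m + 1) (p m - p (m + 2) - 1)) *
            Nat.factorial (p i - p (i + 1) - 1)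
          = ((∏ j ∈ Finset.Icc (i + 1) m,
              (p i - p j) * pochN (p i - p (j - 1) + 1) (p (j - 1) - p (j + 1) - 1)) *
            Nat.factorial (p i - p (i + 1) - 1)) *
            ((p i - p (m + 1)) * pochN (p i - p m + 1) (p m - p (m + 2) - 1)) := by
            rw [mul_right_comm]
        _ = (Nat.factorial (p i - p m) * Nat.factorial (p i - p (m + 1) - 1)) *
            ((p i - p (m + 1)) * pochN (p i - p m + 1) (p m - p (m + 2) - 1)) := by
            rw [ih']
        _ = ((p i - p (m + 1)) * Nat.factorial (p i - p (m + 1) - 1)) *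
            (Nat.factorial (p i - p m) * pochN (p i - p m + 1) (p m - p (m + 2) - 1)) := by
            ring
        _ = Nat.factorial (p i - p (m + 1)) * Nat.factorial (p i - p (m + 2) - 1) := by
            rw [e1, e2]
  have hk' := key k hik le_rfl
  rw [hconv (k + 1) le_rfl] at hk'
  simp only [Nat.sub_zero] at hk'
  have hpki : p k ≤ p i := hle i k hi1 hik le_rfl
  have e3 : Nat.factorial (p i - p k) * pochN (p i - p k + 1) (p k + 1)
      = Nat.factorial (p i + 1) := by
    rw [fact_mul_pochN]
    congr 1
    omega
  calc (∏ j ∈ Finset.Icc (i + 1) k,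
          (p i - p j) * pochN (p i - p (j - 1) + 1) (p (j - 1) - p (j + 1) - 1)) *
        (Nat.factorial (p i - p (i + 1) - 1) * pochN (p i - p k + 1) (p k + 1))
      = ((∏ j ∈ Finset.Icc (i + 1) k,
          (p i - p j) * pochN (p i - p (j - 1) + 1) (p (j - 1) - p (j + 1) - 1)) *
        Nat.factorial (p i - p (i + 1) - 1)) * pochN (p i - p k + 1) (p k + 1) := by
        ring
    _ = (Nat.factorial (p i - p k) * Nat.factorial (p i - 1)) *
        pochN (p i - p k + 1) (p k + 1) := by rw [hk']
    _ = Nat.factorial (p i - 1) *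
        (Nat.factorial (p i - p k) * pochN (p i - p k + 1) (p k + 1)) := by ring
    _ = Nat.factorial (p i - 1) * Nat.factorial (p i + 1) := by rw [e3]
end

section
/- Let φ be the function on partitions defined by φ(λ) = [(λ₁-1)!·(λ₂-1)!···(λ_ℓ-1)! / (r₁(λ)!·r₂(λ)!···)] · t^ℓ/(t)_n, where n = |λ|, ℓ = ℓ(λ) is the number of nonzero parts, r_k(λ) is the number of parts of λ equal to k, and t > 0. Then φ(∅) = 1 and φ is κ₀-harmonic for the Kingman edge multiplicities: φ(μ) = ∑_{λ ↘ μ} κ₀(μ,λ)·φ(λ) for every partition μ. -/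
/-- `μ ↗ λ` : `λ` is obtained from `μ` by adding a single box. -/
def Covers (μ l : YoungDiagram) : Prop := μ ≤ l ∧ l.card = μ.card + 1

/-- Kingman edge multiplicity: the multiplicity in `λ` of the length of the
row of `λ` containing the added box `λ∖μ`. -/
def kappa0 (μ l : YoungDiagram) : ℕ :=
  ∑ c ∈ l.cells \ μ.cells, l.rowLens.count (l.rowLen c.1)

/-- The harmonic function of the Poisson–Dirichlet `t`-measure:
`φ(λ) = [(λ₁-1)!⋯(λ_ℓ-1)! / (r₁(λ)!·r₂(λ)!⋯)] · t^ℓ/(t)_n`. -/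
noncomputable def phiT (t : ℝ) (l : YoungDiagram) : ℝ :=
  (((l.rowLens.map (fun r => Nat.factorial (r - 1))).prod : ℕ) : ℝ)
    / ((∏ m ∈ Finset.Icc 1 l.card, Nat.factorial (l.rowLens.count m) : ℕ) : ℝ)
    * t ^ l.rowLens.length / poch t l.card

namespace Stmt15
open YoungDiagram Finset
open scoped Classical

def Corner (μ : YoungDiagram) (i : ℕ) : Prop := i = 0 ∨ μ.rowLen i < μ.rowLen (i - 1)

lemma rowLen_unique {ν : YoungDiagram} {i m : ℕ}
    (h : ∀ j, (i, j) ∈ ν ↔ j < m) : ν.rowLen i = m := by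
  rcases Nat.lt_trichotomy (ν.rowLen i) m with hlt | he | hgt
  · exact absurd (YoungDiagram.mem_iff_lt_rowLen.mp ((h _).mpr hlt)) (lt_irrefl _)
  · exact he
  · exact absurd ((h m).mp (YoungDiagram.mem_iff_lt_rowLen.mpr hgt)) (lt_irrefl m)

lemma lower_add {μ : YoungDiagram} {i : ℕ} (h : Corner μ i) :
    IsLowerSet (↑(insert (i, μ.rowLen i) μ.cells) : Set (ℕ × ℕ)) := by
  rintro ⟨a, b⟩ ⟨c, d⟩ hle hm
  obtain ⟨hca, hdb⟩ : c ≤ a ∧ d ≤ b := Prod.mk_le_mk.mp hle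
  simp only [Finset.coe_insert, Set.mem_insert_iff, Finset.mem_coe, YoungDiagram.mem_cells]
    at hm ⊢
  rcases hm with hm | hm
  · obtain ⟨ha, hb⟩ := Prod.mk.inj hm
    rw [ha] at hca; rw [hb] at hdb
    by_cases hd : d < μ.rowLen i
    · exact Or.inr (μ.up_left_mem hca le_rfl (YoungDiagram.mem_iff_lt_rowLen.mpr hd))
    · have hd' : d = μ.rowLen i := le_antisymm hdb (not_lt.mp hd)
      by_cases hc : c = i
      · exact Or.inl (by rw [hc, hd'])
      · have hci : c < i := lt_of_le_of_ne hca hc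
        have hi1 : μ.rowLen i < μ.rowLen (i - 1) := by
          rcases h with h0 | h1
          · omega
          · exact h1
        refine Or.inr (YoungDiagram.mem_iff_lt_rowLen.mpr ?_)
        calc d = μ.rowLen i := hd'
          _ < μ.rowLen (i - 1) := hi1
          _ ≤ μ.rowLen c := μ.rowLen_anti c (i - 1) (by omega)
  · exact Or.inr (μ.up_left_mem hca hdb hm)

def add (μ : YoungDiagram) (i : ℕ) (h : Corner μ i) : YoungDiagram :=
  ⟨insert (i, μ.rowLen i) μ.cells, lower_add h⟩

lemma mem_add {μ : YoungDiagram} {i : ℕ} (h : Corner μ i) {c : ℕ × ℕ} :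
    c ∈ add μ i h ↔ c = (i, μ.rowLen i) ∨ c ∈ μ := by
  change c ∈ insert (i, μ.rowLen i) μ.cells ↔ _
  simp [YoungDiagram.mem_cells]

lemma not_mem_self (μ : YoungDiagram) (i : ℕ) : (i, μ.rowLen i) ∉ μ := by
  simp [YoungDiagram.mem_iff_lt_rowLen]

lemma cells_add {μ : YoungDiagram} {i : ℕ} (h : Corner μ i) :
    (add μ i h).cells = insert (i, μ.rowLen i) μ.cells := rfl

lemma card_add {μ : YoungDiagram} {i : ℕ} (h : Corner μ i) :
    (add μ i h).card = μ.card + 1 := by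
  show (insert (i, μ.rowLen i) μ.cells).card = _
  rw [Finset.card_insert_of_notMem (by simpa [YoungDiagram.mem_cells] using not_mem_self μ i)]

lemma covers_add {μ : YoungDiagram} {i : ℕ} (h : Corner μ i) : Covers μ (add μ i h) :=
  ⟨fun c hc => by rw [mem_add h]; exact Or.inr hc, card_add h⟩

lemma rowLen_add {μ : YoungDiagram} {i : ℕ} (h : Corner μ i) (j : ℕ) :
    (add μ i h).rowLen j = if j = i then μ.rowLen i + 1 else μ.rowLen j := by
  split_ifs with hj
  · subst hj
    refine rowLen_unique fun b => ?_
    rw [mem_add h]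
    constructor
    · rintro (hb | hb)
      · simp at hb; omega
      · have := YoungDiagram.mem_iff_lt_rowLen.mp hb; omega
    · intro hb
      rcases Nat.lt_or_ge b (μ.rowLen j) with hb' | hb'
      · exact Or.inr (YoungDiagram.mem_iff_lt_rowLen.mpr hb')
      · left; simp; omega
  · refine rowLen_unique fun b => ?_
    rw [mem_add h]
    constructor
    · rintro (hb | hb)
      · simp at hb; omega
      · exact YoungDiagram.mem_iff_lt_rowLen.mp hb
    · intro hb; exact Or.inr (YoungDiagram.mem_iff_lt_rowLen.mpr hb)

end Stmt15

namespace Stmt15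
open YoungDiagram Finset
open scoped Classical

lemma colLen0_unique {ν : YoungDiagram} {m : ℕ}
    (h : ∀ i, (i, 0) ∈ ν ↔ i < m) : ν.colLen 0 = m := by
  rcases Nat.lt_trichotomy (ν.colLen 0) m with hlt | he | hgt
  · exact absurd (YoungDiagram.mem_iff_lt_colLen.mp ((h _).mpr hlt)) (lt_irrefl _)
  · exact he
  · exact absurd ((h m).mp (YoungDiagram.mem_iff_lt_colLen.mpr hgt)) (lt_irrefl m)

lemma rowLen_pos_iff {μ : YoungDiagram} {i : ℕ} : 0 < μ.rowLen i ↔ i < μ.colLen 0 := by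
  rw [← YoungDiagram.mem_iff_lt_rowLen, YoungDiagram.mem_iff_lt_colLen]

/-- A corner with positive row length is strictly inside the rows. -/
lemma corner_lt_of_pos {μ : YoungDiagram} {i : ℕ} (hk : 0 < μ.rowLen i) :
    i < μ.colLen 0 := rowLen_pos_iff.mp hk

lemma corner_eq_of_zero {μ : YoungDiagram} {i : ℕ} (h : Corner μ i) (hk : μ.rowLen i = 0) :
    i = μ.colLen 0 := by
  have h1 : ¬ i < μ.colLen 0 := fun hc => by
    have := rowLen_pos_iff.mpr hc; omega
  rcases h with h0 | hlt
  · subst h0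
    omega
  · have : 0 < μ.rowLen (i - 1) := by omega
    have := rowLen_pos_iff.mp this
    omega

lemma colLen0_add_pos {μ : YoungDiagram} {i : ℕ} (h : Corner μ i) (hk : 0 < μ.rowLen i) :
    (add μ i h).colLen 0 = μ.colLen 0 := by
  refine colLen0_unique fun a => ?_
  rw [mem_add h]
  constructor
  · rintro (ha | ha)
    · have : a = i ∧ 0 = μ.rowLen i := Prod.mk.inj ha
      omega
    · exact YoungDiagram.mem_iff_lt_colLen.mp ha
  · intro ha; exact Or.inr (YoungDiagram.mem_iff_lt_colLen.mpr ha)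

lemma colLen0_add_zero {μ : YoungDiagram} {i : ℕ} (h : Corner μ i) (hk : μ.rowLen i = 0) :
    (add μ i h).colLen 0 = μ.colLen 0 + 1 := by
  have hi := corner_eq_of_zero h hk
  refine colLen0_unique fun a => ?_
  rw [mem_add h]
  constructor
  · rintro (ha | ha)
    · have : a = i ∧ 0 = μ.rowLen i := Prod.mk.inj ha
      omega
    · have := YoungDiagram.mem_iff_lt_colLen.mp ha; omega
  · intro ha
    by_cases hai : a = i
    · left; rw [hai, hk]
    · right
      exact YoungDiagram.mem_iff_lt_colLen.mpr (by omega)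

/-- count of `m` in the list of row lengths as a finite sum -/
lemma count_map_range (n : ℕ) (f : ℕ → ℕ) (m : ℕ) :
    ((List.range n).map f).count m = ∑ i ∈ Finset.range n, if f i = m then 1 else 0 := by
  induction n with
  | zero => simp
  | succ n ih =>
      rw [List.range_succ, List.map_append, List.count_append, Finset.sum_range_succ, ih]
      simp [List.count_singleton]

lemma count_rowLens (μ : YoungDiagram) (m : ℕ) :
    μ.rowLens.count m = ∑ i ∈ Finset.range (μ.colLen 0), if μ.rowLen i = m then 1 else 0 :=
  count_map_range _ _ _

lemma prod_rowLens (μ : YoungDiagram) (g : ℕ → ℕ) :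
    (μ.rowLens.map g).prod = ∏ i ∈ Finset.range (μ.colLen 0), g (μ.rowLen i) := by
  rw [YoungDiagram.rowLens, List.map_map]
  rfl

lemma rowLen_le_card (μ : YoungDiagram) (i : ℕ) : μ.rowLen i ≤ μ.card := by
  rw [YoungDiagram.rowLen_eq_card]
  exact Finset.card_le_card (fun x hx => (YoungDiagram.mem_row_iff.mp hx).1)

/-- `card = sum of row lengths` -/
lemma card_eq_sum_rowLens (μ : YoungDiagram) :
    μ.card = ∑ i ∈ Finset.range (μ.colLen 0), μ.rowLen i := by
  have : μ.cells = (Finset.range (μ.colLen 0)).biUnion μ.row := by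
    ext c
    simp only [Finset.mem_biUnion, Finset.mem_range, YoungDiagram.mem_row_iff,
      YoungDiagram.mem_cells]
    constructor
    · intro hc
      refine ⟨c.1, ?_, hc, rfl⟩
      have : 0 < μ.rowLen c.1 := by
        have := YoungDiagram.mem_iff_lt_rowLen.mp (show (c.1, c.2) ∈ μ from hc)
        omega
      exact rowLen_pos_iff.mp this
    · rintro ⟨i, _, hc, _⟩; exact hc
  rw [show μ.card = μ.cells.card from rfl, this, Finset.card_biUnion]
  · exact Finset.sum_congr rfl fun i _ => (μ.rowLen_eq_card (i := i)).symm
  · intro x _ y _ hxy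
    simp only [Finset.disjoint_left, YoungDiagram.mem_row_iff]
    rintro c ⟨_, rfl⟩ ⟨_, h2⟩
    exact hxy h2

end Stmt15

namespace Stmt15
open YoungDiagram Finset
open scoped Classical

section CountLemmas

variable {μ : YoungDiagram} {i : ℕ} (h : Corner μ i)

/-- generic split of the count of `μ` at an index `i < colLen 0` -/
lemma count_mu_split (hi : i < μ.colLen 0) (m : ℕ) :
    μ.rowLens.count m = (if μ.rowLen i = m then 1 else 0) +
      ∑ j ∈ (Finset.range (μ.colLen 0)).erase i, (if μ.rowLen j = m then 1 else 0) := by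
  rw [count_rowLens, ← Finset.add_sum_erase _ _ (Finset.mem_range.mpr hi)]

lemma count_add_pos (hk : 0 < μ.rowLen i) (m : ℕ) :
    (add μ i h).rowLens.count m = (if μ.rowLen i + 1 = m then 1 else 0) +
      ∑ j ∈ (Finset.range (μ.colLen 0)).erase i, (if μ.rowLen j = m then 1 else 0) := by
  rw [count_rowLens, colLen0_add_pos h hk,
    ← Finset.add_sum_erase _ _ (Finset.mem_range.mpr (corner_lt_of_pos hk))]
  congr 1
  · rw [rowLen_add h i, if_pos rfl]
  · refine Finset.sum_congr rfl fun j hj => ?_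
    rw [rowLen_add h j, if_neg (Finset.ne_of_mem_erase hj)]

lemma count_add_zero (hk : μ.rowLen i = 0) (m : ℕ) :
    (add μ i h).rowLens.count m = (if 1 = m then 1 else 0) + μ.rowLens.count m := by
  have hi := corner_eq_of_zero h hk
  have h1 : (add μ i h).rowLen (μ.colLen 0) = 1 := by
    rw [← hi, rowLen_add h i, if_pos rfl, hk]
  have hsum : ∑ j ∈ Finset.range (μ.colLen 0), (if (add μ i h).rowLen j = m then 1 else 0)
      = ∑ j ∈ Finset.range (μ.colLen 0), (if μ.rowLen j = m then 1 else 0) :=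
    Finset.sum_congr rfl fun j hj => by
      rw [rowLen_add h j, if_neg (show ¬ j = i by have := Finset.mem_range.mp hj; omega)]
  rw [count_rowLens, count_rowLens, colLen0_add_zero h hk, Finset.sum_range_succ, h1, hsum,
    add_comm]

lemma num_add_pos (hk : 0 < μ.rowLen i) :
    ((add μ i h).rowLens.map (fun r => Nat.factorial (r - 1))).prod
      = μ.rowLen i * (μ.rowLens.map (fun r => Nat.factorial (r - 1))).prod := by
  rw [prod_rowLens, prod_rowLens, colLen0_add_pos h hk]
  have hi : i ∈ Finset.range (μ.colLen 0) := Finset.mem_range.mpr (corner_lt_of_pos hk)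
  rw [← Finset.mul_prod_erase _ _ hi, ← Finset.mul_prod_erase _ (fun j => Nat.factorial (μ.rowLen j - 1)) hi]
  have hrest : ∏ j ∈ (Finset.range (μ.colLen 0)).erase i,
      Nat.factorial ((add μ i h).rowLen j - 1)
      = ∏ j ∈ (Finset.range (μ.colLen 0)).erase i, Nat.factorial (μ.rowLen j - 1) :=
    Finset.prod_congr rfl fun j hj => by rw [rowLen_add h j, if_neg (Finset.ne_of_mem_erase hj)]
  rw [hrest, rowLen_add h i, if_pos rfl, Nat.add_sub_cancel]
  obtain ⟨a, ha⟩ : ∃ a, μ.rowLen i = a + 1 := ⟨μ.rowLen i - 1, by omega⟩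
  rw [ha]
  simp [Nat.factorial_succ, mul_assoc]

lemma num_add_zero (hk : μ.rowLen i = 0) :
    ((add μ i h).rowLens.map (fun r => Nat.factorial (r - 1))).prod
      = (μ.rowLens.map (fun r => Nat.factorial (r - 1))).prod := by
  have hi := corner_eq_of_zero h hk
  rw [prod_rowLens, prod_rowLens, colLen0_add_zero h hk, Finset.prod_range_succ]
  have h1 : (add μ i h).rowLen (μ.colLen 0) = 1 := by
    rw [← hi, rowLen_add h i, if_pos rfl, hk]
  rw [h1]
  simp only [Nat.sub_self, Nat.factorial_zero, mul_one]
  refine Finset.prod_congr rfl fun j hj => ?_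
  rw [rowLen_add h j, if_neg (show ¬ j = i by have := Finset.mem_range.mp hj; omega)]

lemma length_add_pos (hk : 0 < μ.rowLen i) :
    (add μ i h).rowLens.length = μ.rowLens.length := by
  rw [YoungDiagram.length_rowLens, YoungDiagram.length_rowLens, colLen0_add_pos h hk]

lemma length_add_zero (hk : μ.rowLen i = 0) :
    (add μ i h).rowLens.length = μ.rowLens.length + 1 := by
  rw [YoungDiagram.length_rowLens, YoungDiagram.length_rowLens, colLen0_add_zero h hk]

lemma kappa0_add :
    kappa0 μ (add μ i h) = (add μ i h).rowLens.count (μ.rowLen i + 1) := by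
  unfold kappa0
  rw [cells_add h, Finset.insert_sdiff_cancel
    (by simpa [YoungDiagram.mem_cells] using not_mem_self μ i)]
  rw [Finset.sum_singleton, rowLen_add h i, if_pos rfl]

end CountLemmas
end Stmt15

namespace Stmt15
open YoungDiagram Finset
open scoped Classical

section Denom

variable {μ : YoungDiagram} {i : ℕ} (h : Corner μ i)

lemma count_add_at_k (hk : 0 < μ.rowLen i) :
    (add μ i h).rowLens.count (μ.rowLen i) + 1 = μ.rowLens.count (μ.rowLen i) := by
  rw [count_add_pos h hk, count_mu_split (corner_lt_of_pos hk)]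
  split_ifs <;> omega

lemma count_add_at_k1 (hk : 0 < μ.rowLen i) :
    (add μ i h).rowLens.count (μ.rowLen i + 1) = μ.rowLens.count (μ.rowLen i + 1) + 1 := by
  rw [count_add_pos h hk, count_mu_split (corner_lt_of_pos hk)]
  split_ifs <;> omega

lemma count_add_other (hk : 0 < μ.rowLen i) {m : ℕ} (h1 : m ≠ μ.rowLen i)
    (h2 : m ≠ μ.rowLen i + 1) :
    (add μ i h).rowLens.count m = μ.rowLens.count m := by
  rw [count_add_pos h hk, count_mu_split (corner_lt_of_pos hk)]
  split_ifs <;> omega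

/-- products of factorials of functions differing at two points -/
lemma prod_two_diff {s : Finset ℕ} (f g : ℕ → ℕ) {x y : ℕ} (hx : x ∈ s) (hy : y ∈ s)
    (hxy : x ≠ y) (hfx : f x + 1 = g x) (hfy : f y = g y + 1)
    (hrest : ∀ m ∈ s, m ≠ x → m ≠ y → f m = g m) :
    (∏ m ∈ s, Nat.factorial (f m)) * g x = (∏ m ∈ s, Nat.factorial (g m)) * f y := by
  have hy' : y ∈ s.erase x := Finset.mem_erase.mpr ⟨Ne.symm hxy, hy⟩
  rw [← Finset.mul_prod_erase s (fun m => Nat.factorial (f m)) hx,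
    ← Finset.mul_prod_erase _ _ hy',
    ← Finset.mul_prod_erase s (fun m => Nat.factorial (g m)) hx,
    ← Finset.mul_prod_erase _ (fun m => Nat.factorial (g m)) hy']
  have hP : ∏ m ∈ (s.erase x).erase y, Nat.factorial (f m)
      = ∏ m ∈ (s.erase x).erase y, Nat.factorial (g m) :=
    Finset.prod_congr rfl fun m hm => by
      rw [hrest m (Finset.mem_of_mem_erase (Finset.mem_of_mem_erase hm))
        (Finset.ne_of_mem_erase (Finset.mem_of_mem_erase hm)) (Finset.ne_of_mem_erase hm)]
  rw [hP, ← hfx, hfy, Nat.factorial_succ (f x), Nat.factorial_succ (g y)]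
  ring

/-- products of factorials of functions differing at one point -/
lemma prod_one_diff {s : Finset ℕ} (f g : ℕ → ℕ) {x : ℕ} (hx : x ∈ s)
    (hfx : f x = g x + 1) (hrest : ∀ m ∈ s, m ≠ x → f m = g m) :
    ∏ m ∈ s, Nat.factorial (f m) = (∏ m ∈ s, Nat.factorial (g m)) * f x := by
  rw [← Finset.mul_prod_erase s (fun m => Nat.factorial (f m)) hx,
    ← Finset.mul_prod_erase s (fun m => Nat.factorial (g m)) hx]
  have hP : ∏ m ∈ s.erase x, Nat.factorial (f m)
      = ∏ m ∈ s.erase x, Nat.factorial (g m) :=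
    Finset.prod_congr rfl fun m hm => by
      rw [hrest m (Finset.mem_of_mem_erase hm) (Finset.ne_of_mem_erase hm)]
  rw [hP, hfx, Nat.factorial_succ (g x)]
  ring

lemma count_card_succ (μ : YoungDiagram) : μ.rowLens.count (μ.card + 1) = 0 := by
  rw [count_rowLens]
  refine Finset.sum_eq_zero fun j _ => ?_
  rw [if_neg]
  have := rowLen_le_card μ j
  omega

lemma D_ext (μ : YoungDiagram) :
    ∏ m ∈ Finset.Icc 1 (μ.card + 1), Nat.factorial (μ.rowLens.count m)
      = ∏ m ∈ Finset.Icc 1 μ.card, Nat.factorial (μ.rowLens.count m) := by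
  have : Finset.Icc 1 (μ.card + 1) = insert (μ.card + 1) (Finset.Icc 1 μ.card) := by
    ext m; simp [Finset.mem_Icc]; omega
  rw [this, Finset.prod_insert (by simp), count_card_succ]
  simp

lemma denom_add_pos (hk : 0 < μ.rowLen i) :
    (∏ m ∈ Finset.Icc 1 (add μ i h).card, Nat.factorial ((add μ i h).rowLens.count m))
        * μ.rowLens.count (μ.rowLen i)
      = (∏ m ∈ Finset.Icc 1 μ.card, Nat.factorial (μ.rowLens.count m))
        * ((add μ i h).rowLens.count (μ.rowLen i + 1)) := by
  have hkn : μ.rowLen i ≤ μ.card := rowLen_le_card μ i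
  rw [card_add h, ← D_ext μ]
  have hx : μ.rowLen i ∈ Finset.Icc 1 (μ.card + 1) := Finset.mem_Icc.mpr ⟨by omega, by omega⟩
  have hy : μ.rowLen i + 1 ∈ Finset.Icc 1 (μ.card + 1) :=
    Finset.mem_Icc.mpr ⟨by omega, by omega⟩
  have := prod_two_diff (fun m => (add μ i h).rowLens.count m) (fun m => μ.rowLens.count m)
    hx hy (by omega) (count_add_at_k h hk) (count_add_at_k1 h hk)
    (fun m _ h1 h2 => count_add_other h hk h1 h2)
  simpa using this

end Denom
end Stmt15

namespace Stmt15
open YoungDiagram Finset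
open scoped Classical

section Key

variable {μ : YoungDiagram} {i : ℕ} (h : Corner μ i)

lemma denom_add_zero (hk : μ.rowLen i = 0) :
    (∏ m ∈ Finset.Icc 1 (add μ i h).card, Nat.factorial ((add μ i h).rowLens.count m))
      = (∏ m ∈ Finset.Icc 1 μ.card, Nat.factorial (μ.rowLens.count m))
        * ((add μ i h).rowLens.count 1) := by
  rw [card_add h, ← D_ext μ]
  have hx : 1 ∈ Finset.Icc 1 (μ.card + 1) := Finset.mem_Icc.mpr ⟨le_rfl, by omega⟩
  have := prod_one_diff (fun m => (add μ i h).rowLens.count m) (fun m => μ.rowLens.count m)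
    hx (show (add μ i h).rowLens.count 1 = μ.rowLens.count 1 + 1 by
        rw [count_add_zero h hk]; simp [add_comm])
    (fun m _ h1 => show (add μ i h).rowLens.count m = μ.rowLens.count m by
        rw [count_add_zero h hk, if_neg (fun hh => h1 hh.symm), zero_add])
  simpa using this

lemma poch_succ (t : ℝ) (n : ℕ) : poch t (n + 1) = poch t n * (t + n) :=
  Finset.prod_range_succ _ _

lemma poch_pos {t : ℝ} (ht : 0 < t) (n : ℕ) : 0 < poch t n :=
  Finset.prod_pos fun j _ => by positivity

lemma denom_pos (ν : YoungDiagram) :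
    0 < ∏ m ∈ Finset.Icc 1 ν.card, Nat.factorial (ν.rowLens.count m) :=
  Finset.prod_pos fun m _ => Nat.factorial_pos _

lemma alg_pos {a k rk Nm Dl Dm : ℕ} {x pn T : ℝ}
    (hrel : Dl * rk = Dm * a) (hT : T ≠ 0) (hpn : pn ≠ 0) (hDl : Dl ≠ 0) (hDm : Dm ≠ 0) :
    (a : ℝ) * (((k * Nm : ℕ) : ℝ) / (Dl : ℝ) * x / (pn * T))
      = ((k * rk : ℕ) : ℝ) * (((Nm : ℕ) : ℝ) / (Dm : ℝ) * x / pn) / T := by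
  have hrel' : (Dl : ℝ) * rk = (Dm : ℝ) * a := by exact_mod_cast hrel
  have hDl' : (Dl : ℝ) ≠ 0 := Nat.cast_ne_zero.mpr hDl
  have hDm' : (Dm : ℝ) ≠ 0 := Nat.cast_ne_zero.mpr hDm
  push_cast
  field_simp
  linear_combination (-(k * Nm * x) : ℝ) * hrel'

lemma alg_zero {a Nm Dl Dm : ℕ} {x pn T t : ℝ}
    (hrel : Dl = Dm * a) (hT : T ≠ 0) (hpn : pn ≠ 0) (hDl : Dl ≠ 0) (hDm : Dm ≠ 0) :
    (a : ℝ) * (((Nm : ℕ) : ℝ) / (Dl : ℝ) * (x * t) / (pn * T))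
      = t * (((Nm : ℕ) : ℝ) / (Dm : ℝ) * x / pn) / T := by
  have ha : a ≠ 0 := by rintro rfl; simp at hrel; exact hDl (by omega)
  have hrel' : (Dl : ℝ) = (Dm : ℝ) * a := by exact_mod_cast hrel
  have hDl' : (Dl : ℝ) ≠ 0 := Nat.cast_ne_zero.mpr hDl
  have hDm' : (Dm : ℝ) ≠ 0 := Nat.cast_ne_zero.mpr hDm
  have ha' : (a : ℝ) ≠ 0 := Nat.cast_ne_zero.mpr ha
  push_cast
  field_simp
  linear_combination (-(Nm * x * t) : ℝ) * hrel'

lemma key_pos {t : ℝ} (ht : 0 < t) (hk : 0 < μ.rowLen i) :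
    (kappa0 μ (add μ i h) : ℝ) * phiT t (add μ i h)
      = ((μ.rowLen i * μ.rowLens.count (μ.rowLen i) : ℕ) : ℝ) * phiT t μ / (t + μ.card) := by
  have hT : (0:ℝ) < t + μ.card := by positivity
  have hD := denom_add_pos h hk
  rw [card_add h] at hD
  have hDl := denom_pos (add μ i h)
  rw [card_add h] at hDl
  unfold phiT
  rw [kappa0_add h, num_add_pos h hk, length_add_pos h hk, card_add h, poch_succ]
  exact alg_pos hD hT.ne' (poch_pos ht μ.card).ne' hDl.ne' (denom_pos μ).ne'

lemma key_zero {t : ℝ} (ht : 0 < t) (hk : μ.rowLen i = 0) :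
    (kappa0 μ (add μ i h) : ℝ) * phiT t (add μ i h)
      = t * phiT t μ / (t + μ.card) := by
  have hT : (0:ℝ) < t + μ.card := by positivity
  have hD := denom_add_zero h hk
  rw [card_add h] at hD
  have hDl := denom_pos (add μ i h)
  rw [card_add h] at hDl
  unfold phiT
  rw [kappa0_add h, num_add_zero h hk, length_add_zero h hk, card_add h, poch_succ, pow_succ, hk]
  exact alg_zero hD hT.ne' (poch_pos ht μ.card).ne' hDl.ne' (denom_pos μ).ne'

end Key
end Stmt15

namespace Stmt15
open YoungDiagram Finset
open scoped Classical

variable {μ : YoungDiagram}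

lemma corner_le {i : ℕ} (h : Corner μ i) : i ≤ μ.colLen 0 := by
  rcases Nat.eq_zero_or_pos (μ.rowLen i) with hk | hk
  · exact (corner_eq_of_zero h hk).le
  · exact (corner_lt_of_pos hk).le

noncomputable def C (μ : YoungDiagram) : Finset ℕ :=
  (Finset.range (μ.colLen 0 + 1)).filter (fun i => Corner μ i)

lemma mem_C_iff {i : ℕ} : i ∈ C μ ↔ Corner μ i := by
  simp only [C, Finset.mem_filter, Finset.mem_range]
  exact ⟨fun hh => hh.2, fun hh => ⟨by have := corner_le hh; omega, hh⟩⟩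

lemma covers_classify {l : YoungDiagram} (hc : Covers μ l) :
    ∃ i : ℕ, ∃ h : Corner μ i, l = add μ i h := by
  obtain ⟨hle, hcard⟩ := hc
  have hsub : μ.cells ⊆ l.cells := YoungDiagram.cells_subset_iff.mpr hle
  have hcard' : l.cells.card = μ.cells.card + 1 := hcard
  have h1 : (l.cells \ μ.cells).card = 1 := by
    rw [Finset.card_sdiff_of_subset hsub]; omega
  obtain ⟨c, hc1⟩ := Finset.card_eq_one.mp h1
  obtain ⟨a, b⟩ := c
  have hmem : (a, b) ∈ l.cells \ μ.cells := hc1 ▸ Finset.mem_singleton_self _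
  have hcl : (a, b) ∈ l := (Finset.mem_sdiff.mp hmem).1
  have hcm : (a, b) ∉ μ := fun hh => (Finset.mem_sdiff.mp hmem).2 hh
  have hcells : l.cells = insert (a, b) μ.cells := by
    apply Finset.Subset.antisymm
    · intro x hx
      by_cases hxμ : x ∈ μ.cells
      · exact Finset.mem_insert_of_mem hxμ
      · have : x ∈ l.cells \ μ.cells := Finset.mem_sdiff.mpr ⟨hx, hxμ⟩
        rw [hc1, Finset.mem_singleton] at this
        exact this ▸ Finset.mem_insert_self _ _
    · intro x hx
      rcases Finset.mem_insert.mp hx with rfl | hx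
      · exact hcl
      · exact hsub hx
  have hge : μ.rowLen a ≤ b := by
    by_contra hh
    exact hcm (YoungDiagram.mem_iff_lt_rowLen.mpr (by omega))
  have hb : μ.rowLen a = b := by
    rcases Nat.eq_or_lt_of_le hge with he | hlt
    · exact he
    · exfalso
      have hmem2 : (a, μ.rowLen a) ∈ l := l.up_left_mem le_rfl hge hcl
      have hmem3 : (a, μ.rowLen a) ∈ l.cells \ μ.cells :=
        Finset.mem_sdiff.mpr ⟨hmem2, by simpa using not_mem_self μ a⟩
      rw [hc1, Finset.mem_singleton, Prod.mk.injEq] at hmem3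
      omega
  have hcorner : Corner μ a := by
    rcases Nat.eq_zero_or_pos a with rfl | ha
    · exact Or.inl rfl
    · right
      have hmem2 : (a - 1, b) ∈ l := l.up_left_mem (by omega) le_rfl hcl
      have hmem3 : (a - 1, b) ∈ μ := by
        by_contra hh
        have : (a - 1, b) ∈ l.cells \ μ.cells :=
          Finset.mem_sdiff.mpr ⟨hmem2, fun hx => hh hx⟩
        rw [hc1, Finset.mem_singleton, Prod.mk.injEq] at this
        omega
      have := YoungDiagram.mem_iff_lt_rowLen.mp hmem3
      omega
  refine ⟨a, hcorner, ?_⟩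
  have : l.cells = (add μ a hcorner).cells := by
    rw [cells_add, hb, hcells]
  exact YoungDiagram.ext this

end Stmt15

namespace Stmt15
open YoungDiagram Finset
open scoped Classical

variable {μ : YoungDiagram}

lemma add_inj {i i' : ℕ} (h : Corner μ i) (h' : Corner μ i')
    (he : add μ i h = add μ i' h') : i = i' := by
  have hm : (i, μ.rowLen i) ∈ add μ i h := (mem_add h).mpr (Or.inl rfl)
  rw [he, mem_add h'] at hm
  rcases hm with hh | hh
  · exact (Prod.mk.inj hh).1
  · exact absurd hh (not_mem_self μ i)

noncomputable def coverEquiv (μ : YoungDiagram) : {i // i ∈ C μ} ≃ {l // Covers μ l} :=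
  Equiv.ofBijective (fun x => ⟨add μ x.1 (mem_C_iff.mp x.2), covers_add _⟩)
    ⟨fun x y hxy => Subtype.ext (add_inj _ _ (Subtype.mk.inj hxy)),
     fun l => by
       obtain ⟨i, h, hl⟩ := covers_classify l.2
       exact ⟨⟨i, mem_C_iff.mpr h⟩, Subtype.ext hl.symm⟩⟩

noncomputable def addC (μ : YoungDiagram) (i : ℕ) : YoungDiagram :=
  if h : Corner μ i then add μ i h else ⊥

lemma addC_eq {i : ℕ} (h : Corner μ i) : addC μ i = add μ i h := dif_pos h

lemma tsum_covers (F : YoungDiagram → ℝ) :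
    ∑' l : {l // Covers μ l}, F l.1 = ∑ i ∈ C μ, F (addC μ i) := by
  rw [← Equiv.tsum_eq (coverEquiv μ) (fun l => F l.1), tsum_fintype, Finset.univ_eq_attach,
    ← Finset.sum_attach (C μ) (fun i => F (addC μ i))]
  refine Finset.sum_congr rfl fun x _ => ?_
  show F (add μ x.1 (mem_C_iff.mp x.2)) = F (addC μ x.1)
  rw [addC_eq (mem_C_iff.mp x.2)]

lemma weighted_count (μ : YoungDiagram) :
    ∑ m ∈ Finset.Icc 1 μ.card, m * μ.rowLens.count m = μ.card := by
  simp_rw [count_rowLens, Finset.mul_sum]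
  rw [Finset.sum_comm]
  conv_rhs => rw [card_eq_sum_rowLens]
  refine Finset.sum_congr rfl fun j hj => ?_
  have h1 : 0 < μ.rowLen j := rowLen_pos_iff.mpr (Finset.mem_range.mp hj)
  have h2 : μ.rowLen j ≤ μ.card := rowLen_le_card μ j
  rw [Finset.sum_eq_single (μ.rowLen j)]
  · simp
  · intro m _ hne
    rw [if_neg (fun hh => hne hh.symm), mul_zero]
  · intro hnotin
    exact absurd (Finset.mem_Icc.mpr ⟨h1, h2⟩) hnotin

lemma rowLen_top (μ : YoungDiagram) : μ.rowLen (μ.colLen 0) = 0 := by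
  by_contra hh
  exact absurd (rowLen_pos_iff.mp (Nat.pos_of_ne_zero hh)) (lt_irrefl _)

lemma top_corner (μ : YoungDiagram) : Corner μ (μ.colLen 0) := by
  rcases Nat.eq_zero_or_pos (μ.colLen 0) with h0 | hpos
  · exact Or.inl h0
  · right
    have h1 : 0 < μ.rowLen (μ.colLen 0 - 1) := rowLen_pos_iff.mpr (by omega)
    have h2 := rowLen_top μ
    omega

lemma sum_corners (μ : YoungDiagram) :
    ∑ i ∈ (C μ).erase (μ.colLen 0), μ.rowLen i * μ.rowLens.count (μ.rowLen i) = μ.card := by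
  have hpos : ∀ i ∈ (C μ).erase (μ.colLen 0), 0 < μ.rowLen i := by
    intro i hi
    have h1 := corner_le (mem_C_iff.mp (Finset.mem_of_mem_erase hi))
    have h2 := Finset.ne_of_mem_erase hi
    exact rowLen_pos_iff.mpr (by omega)
  have key : ∀ x y : ℕ, x < y → Corner μ y → μ.rowLen x = μ.rowLen y → False := by
    intro x y hxy hc heq
    rcases hc with h0 | hless
    · omega
    · have := μ.rowLen_anti x (y - 1) (by omega)
      omega
  have hinj : ∀ x ∈ (C μ).erase (μ.colLen 0), ∀ y ∈ (C μ).erase (μ.colLen 0),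
      μ.rowLen x = μ.rowLen y → x = y := by
    intro x hx y hy hxy
    rcases Nat.lt_trichotomy x y with hl | he | hl
    · exact absurd (key x y hl (mem_C_iff.mp (Finset.mem_of_mem_erase hy)) hxy) not_false
    · exact he
    · exact absurd (key y x hl (mem_C_iff.mp (Finset.mem_of_mem_erase hx)) hxy.symm) not_false
  have himg : ∑ m ∈ ((C μ).erase (μ.colLen 0)).image μ.rowLen, m * μ.rowLens.count m
      = ∑ i ∈ (C μ).erase (μ.colLen 0), μ.rowLen i * μ.rowLens.count (μ.rowLen i) :=
    Finset.sum_image hinj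
  rw [← himg]
  rw [Finset.sum_subset (Finset.image_subset_iff.mpr fun i hi =>
    Finset.mem_Icc.mpr ⟨hpos i hi, rowLen_le_card μ i⟩) ?_]
  · exact weighted_count μ
  · intro m hm hnot
    have hcount : μ.rowLens.count m = 0 := by
      by_contra hc
      have hex : ∃ j, μ.rowLen j = m := by
        rw [count_rowLens] at hc
        obtain ⟨j, _, hj⟩ := Finset.exists_ne_zero_of_sum_ne_zero hc
        exact ⟨j, by by_contra hh; rw [if_neg hh] at hj; exact hj rfl⟩
      set j₀ := Nat.find hex with hj₀def
      have hj₀ : μ.rowLen j₀ = m := Nat.find_spec hex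
      have hm1 : 1 ≤ m := (Finset.mem_Icc.mp hm).1
      have hj₀N : j₀ < μ.colLen 0 := rowLen_pos_iff.mp (by omega)
      have hcorner : Corner μ j₀ := by
        rcases Nat.eq_zero_or_pos j₀ with h0 | hposj
        · exact Or.inl h0
        · right
          have hne : μ.rowLen (j₀ - 1) ≠ m := fun hh => Nat.find_min hex (by omega) hh
          have hge : μ.rowLen j₀ ≤ μ.rowLen (j₀ - 1) := μ.rowLen_anti _ _ (by omega)
          omega
      exact hnot (Finset.mem_image.mpr ⟨j₀, Finset.mem_erase.mpr
        ⟨by omega, mem_C_iff.mpr hcorner⟩, hj₀⟩)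
    rw [hcount, mul_zero]

lemma rhs_eval {t : ℝ} (ht : 0 < t) (μ : YoungDiagram) :
    ∑ i ∈ C μ, (kappa0 μ (addC μ i) : ℝ) * phiT t (addC μ i) = phiT t μ := by
  have hT : (0:ℝ) < t + μ.card := by positivity
  have hNC : μ.colLen 0 ∈ C μ := mem_C_iff.mpr (top_corner μ)
  rw [← Finset.add_sum_erase _ _ hNC]
  have hN : (kappa0 μ (addC μ (μ.colLen 0)) : ℝ) * phiT t (addC μ (μ.colLen 0))
      = t * phiT t μ / (t + μ.card) := by
    rw [addC_eq (top_corner μ)]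
    exact key_zero (top_corner μ) ht (rowLen_top μ)
  have hrest : ∑ i ∈ (C μ).erase (μ.colLen 0),
      (kappa0 μ (addC μ i) : ℝ) * phiT t (addC μ i)
      = (μ.card : ℝ) * phiT t μ / (t + μ.card) := by
    have hterm : ∀ i ∈ (C μ).erase (μ.colLen 0),
        (kappa0 μ (addC μ i) : ℝ) * phiT t (addC μ i)
        = ((μ.rowLen i * μ.rowLens.count (μ.rowLen i) : ℕ) : ℝ) * phiT t μ / (t + μ.card) := by
      intro i hi
      have hc := mem_C_iff.mp (Finset.mem_of_mem_erase hi)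
      have hp : 0 < μ.rowLen i := by
        have h1 := corner_le hc
        have h2 := Finset.ne_of_mem_erase hi
        exact rowLen_pos_iff.mpr (by omega)
      rw [addC_eq hc]
      exact key_pos hc ht hp
    rw [Finset.sum_congr rfl hterm]
    rw [← Finset.sum_div, ← Finset.sum_mul, ← Nat.cast_sum, sum_corners]
  rw [hN, hrest]
  field_simp

end Stmt15

theorem stmt15 (t : ℝ) (ht : 0 < t) :
    phiT t ⊥ = 1 ∧
      ∀ μ : YoungDiagram,
        phiT t μ = ∑' l : {l : YoungDiagram // Covers μ l}, (kappa0 μ l.1 : ℝ) * phiT t l.1 := by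
  constructor
  · have hc : (⊥ : YoungDiagram).colLen 0 = 0 :=
      Stmt15.colLen0_unique fun i => by simp [YoungDiagram.notMem_bot]
    have hrl : (⊥ : YoungDiagram).rowLens = [] := by
      rw [YoungDiagram.rowLens, hc]; rfl
    have hcard : (⊥ : YoungDiagram).card = 0 := rfl
    unfold phiT
    rw [hrl, hcard]
    simp [poch]
  · intro μ
    exact ((Stmt15.tsum_covers (fun l => (kappa0 μ l : ℝ) * phiT t l)).trans
      (Stmt15.rhs_eval ht μ)).symm
end

section
/- For real t > 0 and integers k ≥ 0, l ≥ 1, the multisum L = (1/k!) ∑_{r₁,…,r_l,s₁,…,s_k ≥ 0} (n)! · t^{k+r₁+⋯+r_l+1} / [ (s₁+l+1)···(s_k+l+1)·1^{r₁}···l^{r_l}·r₁!···r_l!·(t)_{n+1} ] (with n = s₁+⋯+s_k + r₁+2r₂+⋯+l·r_l + kl + k + l) equals (t^{k+1}/k!) · ∫₀¹ (1-v)^{t-1}·v^l·exp(t·y(v))·(-ln(1-v) - y(v))^k dv, where y(v) = v + v²/2 + ⋯ + v^l/l. -/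
open MeasureTheory Set


lemma poch_pos_s17 {x : ℝ} (hx : 0 < x) (n : ℕ) : 0 < poch x n :=
  Finset.prod_pos fun i _ => by positivity

lemma aux_tsum_pi_prod : ∀ {m : ℕ} (a : Fin m → ℕ → ENNReal),
    ∑' f : Fin m → ℕ, ∏ i, a i (f i) = ∏ i, ∑' n, a i n := by
  intro m
  induction m with
  | zero =>
    intro a
    rw [tsum_eq_single (fun i => i.elim0) (fun b hb => absurd (funext fun i => i.elim0) hb)]
    simp
  | succ m ih =>
    intro a
    rw [← Equiv.tsum_eq (Fin.consEquiv fun _ : Fin (m + 1) => ℕ)]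
    have key : ∀ p : ℕ × (Fin m → ℕ),
        (∏ i, a i ((Fin.consEquiv fun _ : Fin (m + 1) => ℕ) p i))
          = a 0 p.1 * ∏ i : Fin m, a i.succ (p.2 i) := by
      intro p
      rw [Fin.prod_univ_succ]
      simp [Fin.consEquiv]
    simp only [key]
    rw [ENNReal.tsum_prod']
    simp only [ENNReal.tsum_mul_left]
    rw [ENNReal.tsum_mul_right, ih fun i => a i.succ, Fin.prod_univ_succ]

lemma aux_hasSum_exp (x : ℝ) :
    HasSum (fun r : ℕ => x ^ r / (Nat.factorial r : ℝ)) (Real.exp x) := by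
  rw [Real.exp_eq_exp_ℝ]
  exact NormedSpace.expSeries_div_hasSum_exp x

lemma aux_hasSum_tail (l : ℕ) {v : ℝ} (hv0 : 0 ≤ v) (hv1 : v < 1) :
    HasSum (fun s : ℕ => v ^ (s + l + 1) / ((s : ℝ) + l + 1))
      (-Real.log (1 - v) - y l v) := by
  have h := Real.hasSum_pow_div_log_of_abs_lt_one (x := v) (by rwa [abs_of_nonneg hv0])
  have hy : ∑ i ∈ Finset.range l, v ^ (i + 1) / ((i : ℝ) + 1) = y l v := by
    unfold y
    refine Finset.sum_congr rfl fun i _ => by push_cast; ring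
  have h3 : HasSum (fun n : ℕ => v ^ ((n + l) + 1) / ((((n + l) : ℕ) : ℝ) + 1))
      (-Real.log (1 - v) - y l v) := by
    rw [hasSum_nat_add_iff (f := fun m : ℕ => v ^ (m + 1) / ((m:ℝ) + 1)) l]
    convert h using 1
    · rfl
    rw [hy]
    ring
  convert h3 using 2 with s
  push_cast
  ring

lemma aux_integrableOn_base {p : ℝ} (hp : -1 < p) (n : ℕ) :
    IntegrableOn (fun v : ℝ => (1 - v) ^ p * v ^ n) (Set.Ioo 0 1) := by
  have h1 : IntervalIntegrable (fun x : ℝ => x ^ p) volume 0 1 :=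
    intervalIntegral.intervalIntegrable_rpow' hp
  have h2 : IntervalIntegrable (fun x : ℝ => (1 - x) ^ p) volume 0 1 := by
    simpa using (h1.comp_sub_left 1).symm
  have h3 := h2.mul_continuousOn (g := fun x : ℝ => x ^ n) (continuous_pow n).continuousOn
  rw [intervalIntegrable_iff_integrableOn_Ioc_of_le zero_le_one] at h3
  exact h3.mono_set Set.Ioo_subset_Ioc_self

lemma aux_contOn_rpow (p : ℝ) : ContinuousOn (fun v : ℝ => (1 - v) ^ p) (Set.Ioo (0:ℝ) 1) := by
  intro v hv
  have h : (1 : ℝ) - v ≠ 0 := by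
    have := hv.2
    intro h; simp only [sub_eq_zero] at h; exact absurd h.symm (ne_of_lt this)
  exact ((Real.continuousAt_rpow_const (1 - v) p (Or.inl h)).comp
    ((continuous_const.sub continuous_id).continuousAt)).continuousWithinAt

lemma aux_gamma_poch (u : ℝ) (hu : 0 < u) : ∀ m : ℕ, Real.Gamma (u + m) = poch u m * Real.Gamma u := by
  intro m
  induction m with
  | zero => simp [poch]
  | succ m ih =>
    have hne : u + (m : ℝ) ≠ 0 := by positivity
    have : Real.Gamma (u + (m + 1 : ℕ)) = (u + m) * Real.Gamma (u + m) := by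
      push_cast
      rw [show u + ((m : ℝ) + 1) = (u + m) + 1 by ring, Real.Gamma_add_one hne]
    rw [this, ih, show poch u (m+1) = poch u m * (u + m) by
      simp [poch, Finset.prod_range_succ]]
    ring

lemma aux_beta (u : ℝ) (hu : 0 < u) (n : ℕ) :
    ∫ v in Set.Ioo (0:ℝ) 1, (1 - v) ^ (u - 1) * v ^ n
      = (Nat.factorial n : ℝ) / poch u (n + 1) := by
  have hs : 0 < Complex.re ((n : ℂ) + 1) := by simp; positivity
  have ht' : 0 < Complex.re (u : ℂ) := by simpa using hu
  have hβ := Complex.Gamma_mul_Gamma_eq_betaIntegral hs ht'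
  set B : ℝ := ∫ x in (0:ℝ)..1, x ^ n * (1 - x) ^ (u - 1) with hB
  have hBI : Complex.betaIntegral ((n : ℂ) + 1) (u : ℂ) = (B : ℂ) := by
    rw [Complex.betaIntegral]
    have hcong : ∀ x ∈ Set.uIcc (0:ℝ) 1,
        (x : ℂ) ^ ((n : ℂ) + 1 - 1) * (1 - (x : ℂ)) ^ ((u : ℂ) - 1)
          = ((x ^ n * (1 - x) ^ (u - 1) : ℝ) : ℂ) := by
      intro x hx
      rw [Set.uIcc_of_le zero_le_one] at hx
      have hx1 : 0 ≤ 1 - x := by linarith [hx.2]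
      have e1 : ((n : ℂ) + 1) - 1 = ((n : ℕ) : ℂ) := by push_cast; ring
      have e2 : (1 : ℂ) - (x : ℂ) = ((1 - x : ℝ) : ℂ) := by push_cast; ring
      have e3 : (u : ℂ) - 1 = ((u - 1 : ℝ) : ℂ) := by push_cast; ring
      rw [e1, e2, e3, Complex.cpow_natCast, ← Complex.ofReal_cpow hx1]
      push_cast
      ring
    rw [intervalIntegral.integral_congr hcong, intervalIntegral.integral_ofReal, hB]
  have hG1 : Complex.Gamma ((n : ℂ) + 1) = ((Nat.factorial n : ℝ) : ℂ) := by
    rw [show ((n : ℂ) + 1) = ((n : ℕ) + 1 : ℂ) by push_cast; ring, Complex.Gamma_nat_eq_factorial]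
    push_cast
    ring
  have hG2 : Complex.Gamma (((n : ℂ) + 1) + (u : ℂ)) = ((Real.Gamma (u + (n + 1 : ℕ)) : ℝ) : ℂ) := by
    rw [show (((n : ℂ) + 1) + (u : ℂ)) = ((u + ((n : ℝ) + 1) : ℝ) : ℂ) by push_cast; ring,
      Complex.Gamma_ofReal]
    push_cast
    ring
  rw [hG1, hBI, hG2, Complex.Gamma_ofReal] at hβ
  have hreal : (Nat.factorial n : ℝ) * Real.Gamma u = Real.Gamma (u + (n + 1 : ℕ)) * B := by
    exact_mod_cast hβ
  rw [aux_gamma_poch u hu (n + 1)] at hreal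
  have hΓ : Real.Gamma u ≠ 0 := (Real.Gamma_pos_of_pos hu).ne'
  have hpoch : poch u (n + 1) ≠ 0 := (poch_pos_s17 hu (n + 1)).ne'
  have hBval : B = (Nat.factorial n : ℝ) / poch u (n + 1) := by
    rw [eq_div_iff hpoch]
    apply mul_right_cancel₀ hΓ
    linear_combination -hreal
  have : ∫ v in Set.Ioo (0:ℝ) 1, (1 - v) ^ (u - 1) * v ^ n
      = ∫ x in (0:ℝ)..1, x ^ n * (1 - x) ^ (u - 1) := by
    rw [intervalIntegral.integral_of_le zero_le_one, integral_Ioc_eq_integral_Ioo]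
    exact setIntegral_congr_fun measurableSet_Ioo fun x _ => by ring
  rw [this, ← hB, hBval]

lemma h4main (t : ℝ) (ht : 0 < t) (k l : ℕ) {v : ℝ} (hv0 : 0 < v) (hv1 : v < 1) :
    (∑' rs : (Fin l → ℕ) × (Fin k → ℕ), ENNReal.ofReal
      ((t ^ (k + (∑ j, rs.1 j) + 1) /
        ((∏ i, ((rs.2 i : ℝ) + l + 1)) *
          ∏ j, ((j.1 + 1 : ℕ) : ℝ) ^ (rs.1 j) * (Nat.factorial (rs.1 j) : ℝ))) *
        ((1 - v) ^ (t - 1) *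
          v ^ ((∑ i, rs.2 i) + (∑ j, (j.1 + 1) * rs.1 j) + k * l + k + l))))
      = ENNReal.ofReal (t ^ (k + 1) *
          ((1 - v) ^ (t - 1) * v ^ l * Real.exp (t * y l v) *
            (-Real.log (1 - v) - y l v) ^ k)) := by
  have h1v : (0:ℝ) < 1 - v := by linarith
  set X : Fin l → ℝ := fun j => t * v ^ (j.1 + 1) / ((j.1 + 1 : ℕ) : ℝ) with hX
  set a : Fin l → ℕ → ℝ := fun j r => X j ^ r / (Nat.factorial r : ℝ) with ha
  set b : ℕ → ℝ := fun s => v ^ (s + l + 1) / ((s : ℝ) + l + 1) with hb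
  have hXnn : ∀ j, 0 ≤ X j := fun j => by
    have : (0:ℝ) < v := hv0
    positivity
  have hann : ∀ j r, 0 ≤ a j r := fun j r => by
    have := hXnn j
    simp only [ha]
    positivity
  have hbnn : ∀ s, 0 ≤ b s := fun s => by
    simp only [hb]
    positivity
  have hbsum : HasSum b (-Real.log (1 - v) - y l v) := aux_hasSum_tail l hv0.le hv1
  have hasum : ∀ j, HasSum (a j) (Real.exp (X j)) := fun j => aux_hasSum_exp (X j)
  have hSnn : 0 ≤ -Real.log (1 - v) - y l v := hbsum.nonneg hbnn
  set C0 : ℝ := t ^ (k + 1) * ((1 - v) ^ (t - 1) * v ^ l) with hC0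
  have hC0nn : 0 ≤ C0 := by
    have h2 : (0:ℝ) ≤ (1 - v) ^ (t - 1) := Real.rpow_nonneg h1v.le _
    simp only [hC0]
    positivity
  have hfact : ∀ rs : (Fin l → ℕ) × (Fin k → ℕ),
      (t ^ (k + (∑ j, rs.1 j) + 1) /
        ((∏ i, ((rs.2 i : ℝ) + l + 1)) *
          ∏ j, ((j.1 + 1 : ℕ) : ℝ) ^ (rs.1 j) * (Nat.factorial (rs.1 j) : ℝ))) *
        ((1 - v) ^ (t - 1) *
          v ^ ((∑ i, rs.2 i) + (∑ j, (j.1 + 1) * rs.1 j) + k * l + k + l))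
      = C0 * ((∏ j, a j (rs.1 j)) * ∏ i, b (rs.2 i)) := by
    intro rs
    have step1 : ∀ j : Fin l, a j (rs.1 j)
        = (t ^ (rs.1 j) * v ^ ((j.1 + 1) * rs.1 j)) /
          (((j.1 + 1 : ℕ) : ℝ) ^ (rs.1 j) * (Nat.factorial (rs.1 j) : ℝ)) := by
      intro j
      simp only [ha, hX]
      rw [div_pow, mul_pow, ← pow_mul, div_div]
    have hA : ∏ j, a j (rs.1 j)
        = (t ^ (∑ j, rs.1 j) * v ^ (∑ j, (j.1 + 1) * rs.1 j)) /
          ∏ j, ((j.1 + 1 : ℕ) : ℝ) ^ (rs.1 j) * (Nat.factorial (rs.1 j) : ℝ) := by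
      rw [Finset.prod_congr rfl (fun j _ => step1 j), Finset.prod_div_distrib,
        Finset.prod_mul_distrib, Finset.prod_pow_eq_pow_sum, Finset.prod_pow_eq_pow_sum]
    have hsum2 : ∑ i : Fin k, (rs.2 i + l + 1) = (∑ i, rs.2 i) + k * l + k := by
      rw [Finset.sum_add_distrib, Finset.sum_add_distrib, Finset.sum_const, Finset.sum_const]
      simp [Finset.card_univ, mul_comm]
    have hB : ∏ i, b (rs.2 i)
        = v ^ ((∑ i, rs.2 i) + k * l + k) / ∏ i, ((rs.2 i : ℝ) + l + 1) := by
      have h1 : ∏ i, b (rs.2 i)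
          = (∏ i, v ^ (rs.2 i + l + 1)) / ∏ i, ((rs.2 i : ℝ) + l + 1) :=
        Finset.prod_div_distrib _ _
      rw [h1, Finset.prod_pow_eq_pow_sum, hsum2]
    rw [hA, hB]
    have hNv : v ^ ((∑ i, rs.2 i) + (∑ j, (j.1 + 1) * rs.1 j) + k * l + k + l)
        = v ^ (∑ j, (j.1 + 1) * rs.1 j) * v ^ ((∑ i, rs.2 i) + k * l + k) * v ^ l := by
      rw [← pow_add, ← pow_add]
      congr 1
      ring
    have htp : t ^ (k + (∑ j, rs.1 j) + 1) = t ^ (k + 1) * t ^ (∑ j, rs.1 j) := by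
      rw [← pow_add]
      congr 1
      ring
    rw [hNv, htp, hC0]
    ring
  simp only [hfact]
  have hofReal : ∀ rs : (Fin l → ℕ) × (Fin k → ℕ),
      ENNReal.ofReal (C0 * ((∏ j, a j (rs.1 j)) * ∏ i, b (rs.2 i)))
        = ENNReal.ofReal C0 *
          ((∏ j, ENNReal.ofReal (a j (rs.1 j))) * ∏ i, ENNReal.ofReal (b (rs.2 i))) := by
    intro rs
    rw [ENNReal.ofReal_mul hC0nn,
      ENNReal.ofReal_mul (Finset.prod_nonneg fun j _ => hann j _),
      ENNReal.ofReal_prod_of_nonneg (fun j _ => hann j _),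
      ENNReal.ofReal_prod_of_nonneg (fun i _ => hbnn _)]
  have hTb : ∑' n, ENNReal.ofReal (b n)
      = ENNReal.ofReal (-Real.log (1 - v) - y l v) := by
    rw [← ENNReal.ofReal_tsum_of_nonneg hbnn hbsum.summable, hbsum.tsum_eq]
  have hTa : ∀ j, ∑' n, ENNReal.ofReal (a j n) = ENNReal.ofReal (Real.exp (X j)) := by
    intro j
    rw [← ENNReal.ofReal_tsum_of_nonneg (hann j) (hasum j).summable, (hasum j).tsum_eq]
  have hXsum : ∑ j : Fin l, X j = t * y l v := by
    rw [hX, Fin.sum_univ_eq_sum_range (fun j => t * v ^ (j + 1) / ((j + 1 : ℕ) : ℝ)) l]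
    unfold y
    rw [Finset.mul_sum]
    refine Finset.sum_congr rfl fun i _ => ?_
    push_cast
    ring
  simp only [hofReal]
  rw [ENNReal.tsum_prod']
  simp only [← mul_assoc, ENNReal.tsum_mul_left]
  rw [ENNReal.tsum_mul_right]
  rw [aux_tsum_pi_prod (fun i => fun n => ENNReal.ofReal (b n)),
    ENNReal.tsum_mul_left,
    aux_tsum_pi_prod (fun j => fun n => ENNReal.ofReal (a j n))]
  simp only [hTb]
  rw [Finset.prod_congr rfl (fun j _ => hTa j),
    ← ENNReal.ofReal_prod_of_nonneg (fun j _ => (Real.exp_pos _).le),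
    ← Real.exp_sum]
  rw [hXsum, Finset.prod_const, Finset.card_univ, Fintype.card_fin,
    ← ENNReal.ofReal_mul hC0nn,
    ← ENNReal.ofReal_pow hSnn,
    ← ENNReal.ofReal_mul (mul_nonneg hC0nn (Real.exp_pos _).le)]
  congr 1
  rw [hC0]
  ring

theorem stmt17 (t : ℝ) (ht : 0 < t) (k l : ℕ) (hl : 1 ≤ l) :
    (1 / (Nat.factorial k : ℝ)) *
      ∑' rs : (Fin l → ℕ) × (Fin k → ℕ),
        ((Nat.factorial ((∑ i, rs.2 i) + (∑ j, (j.1 + 1) * rs.1 j) + k * l + k + l) : ℝ) *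
            t ^ (k + (∑ j, rs.1 j) + 1)) /
          ((∏ i, ((rs.2 i : ℝ) + l + 1)) *
            (∏ j, ((j.1 + 1 : ℕ) : ℝ) ^ (rs.1 j) * (Nat.factorial (rs.1 j) : ℝ)) *
            poch t ((∑ i, rs.2 i) + (∑ j, (j.1 + 1) * rs.1 j) + k * l + k + l + 1))
    = (t ^ (k + 1) / (Nat.factorial k : ℝ)) *
        ∫ v in (0:ℝ)..1, (1 - v) ^ (t - 1) * v ^ l * Real.exp (t * y l v) *
          (-Real.log (1 - v) - y l v) ^ k := by
  have ht1 : (-1:ℝ) < t - 1 := by linarith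
  -- local abbreviations (plain defs, used through explicit equalities)
  set G : ℝ → ℝ := fun v => (1 - v) ^ (t - 1) * v ^ l * Real.exp (t * y l v) *
      (-Real.log (1 - v) - y l v) ^ k with hG
  set N : (Fin l → ℕ) × (Fin k → ℕ) → ℕ := fun rs =>
      (∑ i, rs.2 i) + (∑ j, (j.1 + 1) * rs.1 j) + k * l + k + l with hNdef
  set c : (Fin l → ℕ) × (Fin k → ℕ) → ℝ := fun rs =>
      t ^ (k + (∑ j, rs.1 j) + 1) /
        ((∏ i, ((rs.2 i : ℝ) + l + 1)) *
          ∏ j, ((j.1 + 1 : ℕ) : ℝ) ^ (rs.1 j) * (Nat.factorial (rs.1 j) : ℝ)) with hcdef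
  set f : (Fin l → ℕ) × (Fin k → ℕ) → ℝ := fun rs =>
      ((Nat.factorial (N rs) : ℝ) * t ^ (k + (∑ j, rs.1 j) + 1)) /
        ((∏ i, ((rs.2 i : ℝ) + l + 1)) *
          (∏ j, ((j.1 + 1 : ℕ) : ℝ) ^ (rs.1 j) * (Nat.factorial (rs.1 j) : ℝ)) *
          poch t (N rs + 1)) with hfdef
  set g : (Fin l → ℕ) × (Fin k → ℕ) → ℝ → ℝ := fun rs v =>
      c rs * ((1 - v) ^ (t - 1) * v ^ (N rs)) with hgdef
  -- nonnegativity of c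
  have hcnn : ∀ rs, 0 ≤ c rs := by
    intro rs
    simp only [hcdef]
    have h1 : (0:ℝ) < ∏ i, ((rs.2 i : ℝ) + l + 1) :=
      Finset.prod_pos fun i _ => by positivity
    have h2 : (0:ℝ) < ∏ j : Fin l, ((j.1 + 1 : ℕ) : ℝ) ^ (rs.1 j) * (Nat.factorial (rs.1 j) : ℝ) :=
      Finset.prod_pos fun j _ => by positivity
    positivity
  -- f in terms of c and beta
  have hf_eq : ∀ rs, f rs = c rs * ((Nat.factorial (N rs) : ℝ) / poch t (N rs + 1)) := by
    intro rs
    simp only [hfdef, hcdef]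
    ring
  have hf_int : ∀ rs, f rs = ∫ v in Ioo (0:ℝ) 1, g rs v := by
    intro rs
    rw [hf_eq rs, ← aux_beta t ht (N rs)]
    simp only [hgdef]
    exact (MeasureTheory.integral_const_mul _ _).symm
  have hg_intOn : ∀ rs, IntegrableOn (g rs) (Ioo (0:ℝ) 1) := by
    intro rs
    simp only [hgdef]
    exact (aux_integrableOn_base ht1 (N rs)).const_mul _
  have hg_nonneg : ∀ rs, ∀ v ∈ Ioo (0:ℝ) 1, 0 ≤ g rs v := by
    intro rs v hv
    have h1 : (0:ℝ) ≤ (1 - v) ^ (t - 1) := Real.rpow_nonneg (by linarith [hv.2]) _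
    have h2 : (0:ℝ) ≤ v ^ (N rs) := pow_nonneg hv.1.le _
    simp only [hgdef]
    exact mul_nonneg (hcnn rs) (mul_nonneg h1 h2)
  have hf_nonneg : ∀ rs, 0 ≤ f rs := by
    intro rs
    rw [hf_int rs]
    exact setIntegral_nonneg measurableSet_Ioo (hg_nonneg rs)
  have h2 : ∀ rs, ENNReal.ofReal (f rs)
      = ∫⁻ v in Ioo (0:ℝ) 1, ENNReal.ofReal (g rs v) := by
    intro rs
    rw [hf_int rs]
    refine MeasureTheory.ofReal_integral_eq_lintegral_ofReal (hg_intOn rs) ?_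
    exact (ae_restrict_iff' measurableSet_Ioo).2 (Filter.Eventually.of_forall (hg_nonneg rs))
  have hg_meas : ∀ rs, AEMeasurable (fun v => ENNReal.ofReal (g rs v))
      (volume.restrict (Ioo (0:ℝ) 1)) := by
    intro rs
    apply ENNReal.measurable_ofReal.comp_aemeasurable
    have hcont : ContinuousOn (g rs) (Ioo (0:ℝ) 1) := by
      simp only [hgdef]
      exact continuousOn_const.mul
        ((aux_contOn_rpow (t - 1)).mul (continuous_pow (N rs)).continuousOn)
    exact hcont.aemeasurable measurableSet_Ioo
  have h3 : ∑' rs, ENNReal.ofReal (f rs)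
      = ∫⁻ v in Ioo (0:ℝ) 1, ∑' rs, ENNReal.ofReal (g rs v) := by
    rw [tsum_congr h2]
    exact (MeasureTheory.lintegral_tsum hg_meas).symm
  -- pointwise evaluation of the inner sum
  have h4 : ∀ v ∈ Ioo (0:ℝ) 1,
      (∑' rs, ENNReal.ofReal (g rs v)) = ENNReal.ofReal (t ^ (k + 1) * G v) := by
    intro v hv
    simp only [hgdef, hcdef, hNdef, hG]
    exact h4main t ht k l hv.1 hv.2
  -- continuity of G on (0,1)
  have hyl : Continuous (y l) := by
    unfold y
    exact continuous_finset_sum _ fun i _ => (continuous_pow (i + 1)).div_const _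
  have hG_cont : ContinuousOn G (Ioo (0:ℝ) 1) := by
    have hlog : ContinuousOn (fun v : ℝ => Real.log (1 - v)) (Ioo (0:ℝ) 1) := by
      intro v hv
      have h1 : (1:ℝ) - v ≠ 0 := by
        have := hv.2; intro h; rw [sub_eq_zero] at h; exact absurd h.symm (ne_of_lt this)
      exact ((Real.continuousAt_log h1).comp
        ((continuous_const.sub continuous_id).continuousAt)).continuousWithinAt
    simp only [hG]
    exact (((aux_contOn_rpow (t - 1)).mul (continuous_pow l).continuousOn).mul
        ((Real.continuous_exp.comp (continuous_const.mul hyl)).continuousOn)).mul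
      ((hlog.neg.sub hyl.continuousOn).pow k)
  have hG_nonneg : ∀ v ∈ Ioo (0:ℝ) 1, 0 ≤ G v := by
    intro v hv
    obtain ⟨hva, hvb⟩ := hv
    have h1v : (0:ℝ) < 1 - v := by linarith
    have hS : 0 ≤ -Real.log (1 - v) - y l v :=
      (aux_hasSum_tail l hva.le hvb).nonneg fun s => by positivity
    have h1 : (0:ℝ) ≤ (1 - v) ^ (t - 1) := Real.rpow_nonneg h1v.le _
    simp only [hG]
    exact mul_nonneg (mul_nonneg (mul_nonneg h1 (pow_nonneg hva.le l))
      (Real.exp_pos _).le) (pow_nonneg hS k)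
  -- integrability of G
  have hG_int : IntegrableOn G (Ioo (0:ℝ) 1) := by
    set ε : ℝ := t / (2 * (k + 1)) with hε
    have hεpos : 0 < ε := by positivity
    have hεeq : ε * (2 * ((k:ℝ) + 1)) = t := by
      rw [hε]; field_simp
    have hkε : (k:ℝ) * ε < t := by nlinarith [hεpos]
    set q : ℝ := t - 1 - (k:ℝ) * ε with hq
    have hq1 : (-1:ℝ) < q := by rw [hq]; linarith
    set C1 : ℝ := Real.exp (t * y l 1) * (1 / ε) ^ k with hC1
    have hDint : IntegrableOn (fun v : ℝ => C1 * ((1 - v) ^ q * v ^ 0)) (Ioo (0:ℝ) 1) :=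
      (aux_integrableOn_base hq1 0).const_mul _
    refine Integrable.mono hDint (hG_cont.aestronglyMeasurable measurableSet_Ioo) ?_
    refine (ae_restrict_iff' measurableSet_Ioo).2 (Filter.Eventually.of_forall ?_)
    intro v hv
    have h1v : (0:ℝ) < 1 - v := by linarith [hv.2]
    have hv0 : (0:ℝ) < v := hv.1
    have hSnn : 0 ≤ -Real.log (1 - v) - y l v :=
      (aux_hasSum_tail l hv0.le hv.2).nonneg fun s => by
        have := hv0.le
        positivity
    have hynn : 0 ≤ y l v := by
      unfold y
      exact Finset.sum_nonneg fun i _ => by positivity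
    have hyle : y l v ≤ y l 1 := by
      unfold y
      refine Finset.sum_le_sum fun i _ => ?_
      gcongr
      linarith [hv.2]
    have hlogle : -Real.log (1 - v) ≤ (1 - v) ^ (-ε) / ε := by
      have h0 : (0:ℝ) < (1 - v) ^ (-ε) := Real.rpow_pos_of_pos h1v _
      have hlog2 := Real.log_le_sub_one_of_pos h0
      rw [Real.log_rpow h1v] at hlog2
      rw [le_div_iff₀ hεpos]
      nlinarith [hlog2]
    have hSle : -Real.log (1 - v) - y l v ≤ (1 - v) ^ (-ε) / ε := by linarith
    have h1 : (0:ℝ) ≤ (1 - v) ^ (t - 1) := Real.rpow_nonneg h1v.le _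
    have hGle : G v ≤ C1 * ((1 - v) ^ q * v ^ 0) := by
      have e1 : ((1 - v) ^ (-ε) / ε) ^ k = (1 - v) ^ (-((k:ℝ) * ε)) * (1 / ε) ^ k := by
        rw [div_pow, ← Real.rpow_natCast ((1 - v) ^ (-ε)) k, ← Real.rpow_mul h1v.le,
          show (-ε) * (k:ℝ) = -((k:ℝ) * ε) by ring, one_div, inv_pow, div_eq_mul_inv]
      have e2 : (1 - v) ^ (t - 1) * (1 - v) ^ (-((k:ℝ) * ε)) = (1 - v) ^ q := by
        rw [← Real.rpow_add h1v, hq,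
          show t - 1 - (k:ℝ) * ε = t - 1 + -((k:ℝ) * ε) by ring]
      have hvl : v ^ l ≤ 1 := by
        calc v ^ l ≤ 1 ^ l := pow_le_pow_left₀ hv0.le (by linarith [hv.2]) _
          _ = 1 := one_pow l
      have hexp : Real.exp (t * y l v) ≤ Real.exp (t * y l 1) :=
        Real.exp_le_exp.2 (by nlinarith [hyle])
      have hpow : (-Real.log (1 - v) - y l v) ^ k ≤ ((1 - v) ^ (-ε) / ε) ^ k :=
        pow_le_pow_left₀ hSnn hSle k
      have m1 : (1 - v) ^ (t - 1) * v ^ l ≤ (1 - v) ^ (t - 1) * 1 :=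
        mul_le_mul_of_nonneg_left hvl h1
      have m2 : (1 - v) ^ (t - 1) * v ^ l * Real.exp (t * y l v)
          ≤ (1 - v) ^ (t - 1) * 1 * Real.exp (t * y l 1) :=
        mul_le_mul m1 hexp (Real.exp_pos _).le (mul_nonneg h1 zero_le_one)
      calc G v ≤ (1 - v) ^ (t - 1) * 1 * Real.exp (t * y l 1) * ((1 - v) ^ (-ε) / ε) ^ k := by
            rw [hG]
            exact mul_le_mul m2 hpow (pow_nonneg hSnn k)
              (mul_nonneg (mul_nonneg h1 zero_le_one) (Real.exp_pos _).le)
        _ = C1 * ((1 - v) ^ q * v ^ 0) := by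
            rw [e1, pow_zero, hC1, ← e2]
            ring
    have hDnn : 0 ≤ C1 * ((1 - v) ^ q * v ^ 0) := by
      have h2 : (0:ℝ) ≤ (1 - v) ^ q := Real.rpow_nonneg h1v.le _
      have h3 : (0:ℝ) ≤ C1 := by
        rw [hC1]
        positivity
      positivity
    rw [Real.norm_eq_abs, Real.norm_eq_abs, abs_of_nonneg (hG_nonneg v hv),
      abs_of_nonneg hDnn]
    exact hGle
  -- assemble
  have hint2 : Integrable (fun v => t ^ (k + 1) * G v) (volume.restrict (Ioo (0:ℝ) 1)) :=
    hG_int.const_mul _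
  have h5 : (∫⁻ v in Ioo (0:ℝ) 1, ENNReal.ofReal (t ^ (k + 1) * G v))
      = ENNReal.ofReal (t ^ (k + 1) * ∫ v in Ioo (0:ℝ) 1, G v) := by
    rw [← MeasureTheory.integral_const_mul]
    exact (MeasureTheory.ofReal_integral_eq_lintegral_ofReal hint2
      ((ae_restrict_iff' measurableSet_Ioo).2 (Filter.Eventually.of_forall fun v hv =>
        mul_nonneg (by positivity) (hG_nonneg v hv)))).symm
  have key : ∑' rs, ENNReal.ofReal (f rs)
      = ENNReal.ofReal (t ^ (k + 1) * ∫ v in Ioo (0:ℝ) 1, G v) := by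
    rw [h3, ← h5]
    exact setLIntegral_congr_fun measurableSet_Ioo h4
  have hRnn : 0 ≤ ∫ v in Ioo (0:ℝ) 1, G v := setIntegral_nonneg measurableSet_Ioo hG_nonneg
  have hsum : ∑' rs, f rs = t ^ (k + 1) * ∫ v in Ioo (0:ℝ) 1, G v := by
    have e1 : ∀ rs, f rs = (ENNReal.ofReal (f rs)).toReal :=
      fun rs => (ENNReal.toReal_ofReal (hf_nonneg rs)).symm
    rw [tsum_congr e1, ← ENNReal.tsum_toReal_eq fun _ => ENNReal.ofReal_ne_top, key,
      ENNReal.toReal_ofReal (mul_nonneg (by positivity) hRnn)]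
  have hIoo : (∫ v in (0:ℝ)..1, G v) = ∫ v in Ioo (0:ℝ) 1, G v := by
    rw [intervalIntegral.integral_of_le zero_le_one, MeasureTheory.integral_Ioc_eq_integral_Ioo]
  have hgoal : (∑' rs : (Fin l → ℕ) × (Fin k → ℕ),
      ((Nat.factorial ((∑ i, rs.2 i) + (∑ j, (j.1 + 1) * rs.1 j) + k * l + k + l) : ℝ) *
          t ^ (k + (∑ j, rs.1 j) + 1)) /
        ((∏ i, ((rs.2 i : ℝ) + l + 1)) *
          (∏ j, ((j.1 + 1 : ℕ) : ℝ) ^ (rs.1 j) * (Nat.factorial (rs.1 j) : ℝ)) *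
          poch t ((∑ i, rs.2 i) + (∑ j, (j.1 + 1) * rs.1 j) + k * l + k + l + 1)))
      = ∑' rs, f rs := by
    refine tsum_congr fun rs => ?_
    simp only [hfdef, hNdef]
  rw [hgoal, hsum, hIoo]
  ring
end

section
/- Let θ > 0 and let μ ⊂ λ be partitions with λ = μ ∪ {(i,j)} for a box (i,j). Define H'_θ(ν) = ∏_{b∈ν} (a_ν(b) + θ·ℓ_ν(b) + θ), where a_ν(b) and ℓ_ν(b) are the arm and leg lengths of box b in ν. Then H'_θ(λ)/( θ·H'_θ(μ) ) = ∏_{k=1}^{i-1} (a_μ(k,j) + θ·ℓ_μ(k,j) + 2θ)/(a_μ(k,j) + θ·ℓ_μ(k,j) + θ) · ∏_{k=1}^{j-1} (a_μ(i,k) + θ·ℓ_μ(i,k) + θ + 1)/(a_μ(i,k) + θ·ℓ_μ(i,k) + θ); in particular θ·H'_θ(μ)/H'_θ(λ) is bounded below by a positive constant depending only on i, j, θ (not on μ). -/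
/-- Arm length of a (0-indexed) box `(r,c)` in the diagram `ν`. -/
def armLen (ν : YoungDiagram) (r c : ℕ) : ℕ := ν.rowLen r - c - 1

/-- Leg length of a (0-indexed) box `(r,c)` in the diagram `ν`. -/
def legLen (ν : YoungDiagram) (r c : ℕ) : ℕ := ν.colLen c - r - 1

/-- `H'_θ(ν) = ∏_{b ∈ ν} (a_ν(b) + θ·ℓ_ν(b) + θ)`. -/
noncomputable def Hp (θ : ℝ) (ν : YoungDiagram) : ℝ :=
  ∏ b ∈ ν.cells, ((armLen ν b.1 b.2 : ℝ) + θ * (legLen ν b.1 b.2 : ℝ) + θ)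

private noncomputable def fac (θ : ℝ) (ν : YoungDiagram) (b : ℕ × ℕ) : ℝ :=
  (armLen ν b.1 b.2 : ℝ) + θ * (legLen ν b.1 b.2 : ℝ) + θ

private lemma Hp_eq (θ : ℝ) (ν : YoungDiagram) : Hp θ ν = ∏ b ∈ ν.cells, fac θ ν b := rfl

private lemma fac_pos {θ : ℝ} (hθ : 0 < θ) (ν : YoungDiagram) (b : ℕ × ℕ) :
    0 < fac θ ν b := by
  unfold fac; positivity

private lemma nat_eq_of_lt_iff {a b : ℕ} (h : ∀ k, k < a ↔ k < b) : a = b :=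
  le_antisymm (le_of_not_gt fun hb => lt_irrefl b ((h b).mp hb))
    (le_of_not_gt fun ha => lt_irrefl a ((h a).mpr ha))

private lemma Hp_pos {θ : ℝ} (hθ : 0 < θ) (ν : YoungDiagram) : 0 < Hp θ ν := by
  rw [Hp_eq]
  exact Finset.prod_pos fun b _ => fac_pos hθ ν b

private lemma main_eq (θ : ℝ) (hθ : 0 < θ) (i j : ℕ) (μ l : YoungDiagram)
    (hμ : (i, j) ∉ μ.cells) (hl : l.cells = insert (i, j) μ.cells) :
    Hp θ l / (θ * Hp θ μ)
      = (∏ k ∈ Finset.range i,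
          ((armLen μ k j : ℝ) + θ * (legLen μ k j : ℝ) + 2 * θ) /
            ((armLen μ k j : ℝ) + θ * (legLen μ k j : ℝ) + θ)) *
        ∏ k ∈ Finset.range j,
          ((armLen μ i k : ℝ) + θ * (legLen μ i k : ℝ) + θ + 1) /
            ((armLen μ i k : ℝ) + θ * (legLen μ i k : ℝ) + θ) := by
  have hμ' : (i, j) ∉ μ := fun h => hμ ((YoungDiagram.mem_cells _).mpr h)
  have hmem : ∀ x : ℕ × ℕ, x ∈ l ↔ x = (i, j) ∨ x ∈ μ := by
    intro x
    rw [← YoungDiagram.mem_cells, hl, Finset.mem_insert, YoungDiagram.mem_cells]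
  have hijl : (i, j) ∈ l := (hmem _).mpr (Or.inl rfl)
  have hrow_mem : ∀ k, k < j → (i, k) ∈ μ := by
    intro k hk
    rcases (hmem _).mp (l.up_left_mem le_rfl hk.le hijl) with h | h
    · exact absurd (Prod.mk.inj h).2 hk.ne
    · exact h
  have hcol_mem : ∀ k, k < i → (k, j) ∈ μ := by
    intro k hk
    rcases (hmem _).mp (l.up_left_mem hk.le le_rfl hijl) with h | h
    · exact absurd (Prod.mk.inj h).1 hk.ne
    · exact h
  have hμrow : μ.rowLen i = j := by
    refine nat_eq_of_lt_iff fun k => ⟨fun hk => ?_, fun hk =>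
      YoungDiagram.mem_iff_lt_rowLen.mp (hrow_mem k hk)⟩
    by_contra h
    exact hμ' (μ.up_left_mem le_rfl (le_of_not_gt h)
      (YoungDiagram.mem_iff_lt_rowLen.mpr hk))
  have hμcol : μ.colLen j = i := by
    refine nat_eq_of_lt_iff fun k => ⟨fun hk => ?_, fun hk =>
      YoungDiagram.mem_iff_lt_colLen.mp (hcol_mem k hk)⟩
    by_contra h
    exact hμ' (μ.up_left_mem (le_of_not_gt h) le_rfl
      (YoungDiagram.mem_iff_lt_colLen.mpr hk))
  have hmem_ne_row : ∀ r k : ℕ, r ≠ i → ((r, k) ∈ l ↔ (r, k) ∈ μ) := by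
    intro r k hr
    rw [hmem]
    refine ⟨fun h => ?_, Or.inr⟩
    rcases h with h | h
    · exact absurd (Prod.mk.inj h).1 hr
    · exact h
  have hmem_ne_col : ∀ r k : ℕ, k ≠ j → ((r, k) ∈ l ↔ (r, k) ∈ μ) := by
    intro r k hk
    rw [hmem]
    refine ⟨fun h => ?_, Or.inr⟩
    rcases h with h | h
    · exact absurd (Prod.mk.inj h).2 hk
    · exact h
  have hlrow_ne : ∀ r : ℕ, r ≠ i → l.rowLen r = μ.rowLen r := by
    intro r hr
    refine nat_eq_of_lt_iff fun k => ?_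
    rw [← YoungDiagram.mem_iff_lt_rowLen, ← YoungDiagram.mem_iff_lt_rowLen]
    exact hmem_ne_row r k hr
  have hlcol_ne : ∀ c : ℕ, c ≠ j → l.colLen c = μ.colLen c := by
    intro c hc
    refine nat_eq_of_lt_iff fun k => ?_
    rw [← YoungDiagram.mem_iff_lt_colLen, ← YoungDiagram.mem_iff_lt_colLen]
    exact hmem_ne_col k c hc
  have hlrow_i : l.rowLen i = j + 1 := by
    refine nat_eq_of_lt_iff fun k => ⟨fun hk => ?_, fun hk => ?_⟩
    · rcases (hmem _).mp (YoungDiagram.mem_iff_lt_rowLen.mpr hk) with h | h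
      · rw [(Prod.mk.inj h).2]; omega
      · have := YoungDiagram.mem_iff_lt_rowLen.mp h
        omega
    · exact YoungDiagram.mem_iff_lt_rowLen.mp
        (l.up_left_mem le_rfl (Nat.le_of_lt_succ hk) hijl)
  have hlcol_j : l.colLen j = i + 1 := by
    refine nat_eq_of_lt_iff fun k => ⟨fun hk => ?_, fun hk => ?_⟩
    · rcases (hmem _).mp (YoungDiagram.mem_iff_lt_colLen.mpr hk) with h | h
      · rw [(Prod.mk.inj h).1]; omega
      · have := YoungDiagram.mem_iff_lt_colLen.mp h
        omega
    · exact YoungDiagram.mem_iff_lt_colLen.mp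
        (l.up_left_mem (Nat.le_of_lt_succ hk) le_rfl hijl)
  -- the new box contributes a factor θ
  have hnew : fac θ l (i, j) = θ := by
    simp [fac, armLen, legLen, hlrow_i, hlcol_j]
  have hHl : Hp θ l = θ * ∏ b ∈ μ.cells, fac θ l b := by
    rw [Hp_eq, hl, Finset.prod_insert hμ, hnew]
  have hstep : Hp θ l / (θ * Hp θ μ) = ∏ b ∈ μ.cells, (fac θ l b / fac θ μ b) := by
    rw [hHl, Hp_eq, mul_div_mul_left _ _ (ne_of_gt hθ), ← Finset.prod_div_distrib]
  rw [hstep]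
  -- restrict to the boxes whose factor changes
  set Scol : Finset (ℕ × ℕ) := (Finset.range i).image fun k => (k, j) with hScol
  set Srow : Finset (ℕ × ℕ) := (Finset.range j).image fun k => (i, k) with hSrow
  have hdisj : Disjoint Scol Srow := by
    rw [Finset.disjoint_left]
    intro b hb hb'
    simp only [hScol, hSrow, Finset.mem_image, Finset.mem_range] at hb hb'
    obtain ⟨k, hk, rfl⟩ := hb
    obtain ⟨k', _, h⟩ := hb'
    exact absurd ((Prod.mk.inj h).1).symm hk.ne
  have hsub : Scol ∪ Srow ⊆ μ.cells := by
    intro b hb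
    rcases Finset.mem_union.mp hb with h | h <;>
      simp only [hScol, hSrow, Finset.mem_image, Finset.mem_range] at h <;>
      obtain ⟨k, hk, rfl⟩ := h
    · exact (YoungDiagram.mem_cells _).mpr (hcol_mem k hk)
    · exact (YoungDiagram.mem_cells _).mpr (hrow_mem k hk)
  have houtside : ∀ b ∈ μ.cells, b ∉ Scol ∪ Srow → fac θ l b / fac θ μ b = 1 := by
    rintro ⟨r, c⟩ hb hbS
    rw [Finset.mem_union] at hbS
    push_neg at hbS
    obtain ⟨h1, h2⟩ := hbS
    simp only [hScol, hSrow, Finset.mem_image, Finset.mem_range] at h1 h2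
    have hbμ : (r, c) ∈ μ := (YoungDiagram.mem_cells _).mp hb
    have hr : r ≠ i := by
      rintro rfl
      have hcj : c < j := by
        have := YoungDiagram.mem_iff_lt_rowLen.mp hbμ
        omega
      exact h2 ⟨c, hcj, rfl⟩
    have hc : c ≠ j := by
      rintro rfl
      have hri : r < i := by
        have := YoungDiagram.mem_iff_lt_colLen.mp hbμ
        omega
      exact h1 ⟨r, hri, rfl⟩
    have heq : fac θ l (r, c) = fac θ μ (r, c) := by
      simp only [fac, armLen, legLen, hlrow_ne r hr, hlcol_ne c hc]
    rw [heq, div_self (ne_of_gt (fac_pos hθ μ (r, c)))]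
  rw [← Finset.prod_subset hsub houtside, Finset.prod_union hdisj]
  congr 1
  · rw [hScol, Finset.prod_image (by intro x _ y _ h; exact (Prod.mk.inj h).1)]
    refine Finset.prod_congr rfl fun k hk => ?_
    rw [Finset.mem_range] at hk
    simp only [fac, armLen, legLen, hlrow_ne k hk.ne, hlcol_j, hμcol]
    rw [show i + 1 - k - 1 = (i - k - 1) + 1 by omega]
    push_cast
    ring
  · rw [hSrow, Finset.prod_image (by intro x _ y _ h; exact (Prod.mk.inj h).2)]
    refine Finset.prod_congr rfl fun k hk => ?_
    rw [Finset.mem_range] at hk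
    simp only [fac, armLen, legLen, hlcol_ne k hk.ne, hlrow_i, hμrow]
    rw [show j + 1 - k - 1 = (j - k - 1) + 1 by omega]
    push_cast
    ring

theorem stmt18 (θ : ℝ) (hθ : 0 < θ) (i j : ℕ) :
    (∀ μ l : YoungDiagram, (i, j) ∉ μ.cells → l.cells = insert (i, j) μ.cells →
      Hp θ l / (θ * Hp θ μ)
        = (∏ k ∈ Finset.range i,
            ((armLen μ k j : ℝ) + θ * (legLen μ k j : ℝ) + 2 * θ) /
              ((armLen μ k j : ℝ) + θ * (legLen μ k j : ℝ) + θ)) *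
          ∏ k ∈ Finset.range j,
            ((armLen μ i k : ℝ) + θ * (legLen μ i k : ℝ) + θ + 1) /
              ((armLen μ i k : ℝ) + θ * (legLen μ i k : ℝ) + θ)) ∧
    ∃ ε : ℝ, 0 < ε ∧
      ∀ μ l : YoungDiagram, (i, j) ∉ μ.cells → l.cells = insert (i, j) μ.cells →
        ε ≤ θ * Hp θ μ / Hp θ l := by
  constructor
  · exact fun μ l hμ hl => main_eq θ hθ i j μ l hμ hl
  · refine ⟨(2 ^ i * ((θ + 1) / θ) ^ j)⁻¹, by positivity, fun μ l hμ hl => ?_⟩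
    have hHμ := Hp_pos hθ μ
    have hHl := Hp_pos hθ l
    have heq := main_eq θ hθ i j μ l hμ hl
    set P := (∏ k ∈ Finset.range i,
        ((armLen μ k j : ℝ) + θ * (legLen μ k j : ℝ) + 2 * θ) /
          ((armLen μ k j : ℝ) + θ * (legLen μ k j : ℝ) + θ)) *
      ∏ k ∈ Finset.range j,
        ((armLen μ i k : ℝ) + θ * (legLen μ i k : ℝ) + θ + 1) /
          ((armLen μ i k : ℝ) + θ * (legLen μ i k : ℝ) + θ) with hP
    have hPpos : 0 < P := heq ▸ (by positivity)
    have hinv : θ * Hp θ μ / Hp θ l = P⁻¹ := by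
      rw [← heq, inv_div]
    rw [hinv]
    have h1 : (∏ k ∈ Finset.range i,
        ((armLen μ k j : ℝ) + θ * (legLen μ k j : ℝ) + 2 * θ) /
          ((armLen μ k j : ℝ) + θ * (legLen μ k j : ℝ) + θ)) ≤ 2 ^ i := by
      calc _ ≤ ∏ _k ∈ Finset.range i, (2 : ℝ) := by
            refine Finset.prod_le_prod (fun k _ => by positivity) fun k _ => ?_
            rw [div_le_iff₀ (by positivity)]
            have ha : (0 : ℝ) ≤ (armLen μ k j : ℝ) := Nat.cast_nonneg _
            have hb : (0 : ℝ) ≤ θ * (legLen μ k j : ℝ) :=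
              mul_nonneg hθ.le (Nat.cast_nonneg _)
            linarith
        _ = 2 ^ i := by simp
    have h2 : (∏ k ∈ Finset.range j,
        ((armLen μ i k : ℝ) + θ * (legLen μ i k : ℝ) + θ + 1) /
          ((armLen μ i k : ℝ) + θ * (legLen μ i k : ℝ) + θ)) ≤ ((θ + 1) / θ) ^ j := by
      calc _ ≤ ∏ _k ∈ Finset.range j, ((θ + 1) / θ) := by
            refine Finset.prod_le_prod (fun k _ => by positivity) fun k _ => ?_
            rw [div_le_div_iff₀ (by positivity) hθ]
            have ha : (0 : ℝ) ≤ (armLen μ i k : ℝ) := Nat.cast_nonneg _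
            have hb : (0 : ℝ) ≤ θ * (legLen μ i k : ℝ) :=
              mul_nonneg hθ.le (Nat.cast_nonneg _)
            nlinarith
        _ = ((θ + 1) / θ) ^ j := by simp [div_pow]
    have hp2 : (0 : ℝ) ≤ ∏ k ∈ Finset.range j,
        ((armLen μ i k : ℝ) + θ * (legLen μ i k : ℝ) + θ + 1) /
          ((armLen μ i k : ℝ) + θ * (legLen μ i k : ℝ) + θ) :=
      Finset.prod_nonneg fun k _ => by positivity
    have hPle : P ≤ 2 ^ i * ((θ + 1) / θ) ^ j := by
      rw [hP]
      calc _ ≤ (2 : ℝ) ^ i * ∏ k ∈ Finset.range j,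
            ((armLen μ i k : ℝ) + θ * (legLen μ i k : ℝ) + θ + 1) /
              ((armLen μ i k : ℝ) + θ * (legLen μ i k : ℝ) + θ) :=
            mul_le_mul_of_nonneg_right h1 hp2
        _ ≤ _ := mul_le_mul_of_nonneg_left h2 (by positivity)
    exact inv_anti₀ hPpos hPle
end

section
/- Let θ > 0 and n ≥ 1 be an integer, and let μ = (μ₁,…,μ_k) be a partition with μ_k ≥ 1 and |μ| = n-1; set λ = (μ₁,…,μ_k,1), μ_{k+1} = 1, μ_r = 0 for r ≥ k+2. Then H_θ(μ)·H'_θ(λ) = [ θ·∏_{i=1}^{k}(μ_i-μ_{i+1})!·∏_{1≤i<s≤k+1}((s-i)θ + μ_i - μ_{s-1})_{μ_{s-1}-μ_{s+1}+1} / ∏_{1≤i<s≤k}((s-i)θ + μ_i - μ_s) ] · ∏_{i=1}^{k} (μ_i - 1 + (k-i+2)θ)(μ_i + (k-i)θ) / [ (μ_i + (k-i+1)θ)(μ_i - 1 + (k-i+1)θ) ], where H_θ(μ) = ∏_{b∈μ}(a_μ(b) + θℓ_μ(b) + 1) and H'_θ(λ) = ∏_{b∈λ}(a_λ(b) + θℓ_λ(b)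 + θ). -/
/-- The hook-type product `∏_{b∈μ}(a_μ(b) + θ·ℓ_μ(b) + c)` for the partition
`(μ₁, …, μ_k)` given by `μ` on indices `1, …, k`.  Here, for the (1-indexed)
box `(i,j)`, the arm length is `μ_i - j` and the leg length is `μ'_j - i`,
where `μ'_j = #{1 ≤ r ≤ k : μ_r ≥ j}` is the conjugate partition. -/
noncomputable def conj (k : ℕ) (μ : ℕ → ℕ) (j : ℕ) : ℕ :=
  ((Finset.Icc 1 k).filter (fun r => j ≤ μ r)).card

noncomputable def Hgen (θ c : ℝ) (k : ℕ) (μ : ℕ → ℕ) : ℝ :=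
  ∏ i ∈ Finset.Icc 1 k, ∏ j ∈ Finset.Icc 1 (μ i),
    (((μ i - j : ℕ) : ℝ) + θ * (((conj k μ j - i : ℕ) : ℝ)) + c)

lemma prod_Ioc_reflect (g : ℕ → ℝ) (a b : ℕ) :
    ∏ j ∈ Finset.Ioc a b, g j = ∏ m ∈ Finset.range (b - a), g (b - m) := by
  refine Finset.prod_nbij' (fun j => b - j) (fun m => b - m) ?_ ?_ ?_ ?_ ?_ <;>
    intro t ht <;> simp only [Finset.mem_Ioc, Finset.mem_range] at * <;> first
      | omega
      | (congr 1; omega)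

lemma nu_chain (ν : ℕ → ℕ) (r s : ℕ) (hrs : r ≤ s)
    (h : ∀ t, r ≤ t → t < s → ν (t + 1) ≤ ν t) : ν s ≤ ν r := by
  induction s, hrs using Nat.le_induction with
  | base => exact le_rfl
  | succ n hn ih =>
    exact le_trans (h n hn (by omega)) (ih (fun t ht ht' => h t ht (by omega)))

lemma prod_telescope (f : ℕ → ℝ) (ν : ℕ → ℕ) (a b : ℕ) (hab : a ≤ b)
    (hν : ∀ s, a ≤ s → s ≤ b → ν (s + 1) ≤ ν s) :
    ∏ s ∈ Finset.Icc a b, ∏ j ∈ Finset.Ioc (ν (s + 1)) (ν s), f j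
      = ∏ j ∈ Finset.Ioc (ν (b + 1)) (ν a), f j := by
  induction b with
  | zero =>
    interval_cases a
    simp
  | succ b ih =>
    rcases Nat.lt_or_ge a (b + 1) with h | h
    · rw [Finset.prod_Icc_succ_top (by omega), ih (by omega) (fun s hs hs' => hν s hs (by omega)),
        mul_comm, Finset.prod_Ioc_consecutive f (hν (b + 1) (by omega) le_rfl)
          (nu_chain ν a (b + 1) (by omega) (fun t ht ht' => hν t ht (by omega)))]
    · have : a = b + 1 := le_antisymm hab h
      subst this
      simp

lemma conj_congr (k : ℕ) (μ μ' : ℕ → ℕ) (h : ∀ r, 1 ≤ r → r ≤ k → μ r = μ' r) (j : ℕ) :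
    conj k μ j = conj k μ' j := by
  unfold conj
  congr 1
  apply Finset.filter_congr
  intro r hr
  simp only [Finset.mem_Icc] at hr
  rw [h r hr.1 hr.2]

lemma Hgen_congr (θ c : ℝ) (k : ℕ) (μ μ' : ℕ → ℕ) (h : ∀ r, 1 ≤ r → r ≤ k → μ r = μ' r) :
    Hgen θ c k μ = Hgen θ c k μ' := by
  unfold Hgen
  refine Finset.prod_congr rfl fun i hi => ?_
  simp only [Finset.mem_Icc] at hi
  rw [h i hi.1 hi.2]
  refine Finset.prod_congr rfl fun j hj => ?_
  rw [conj_congr k μ μ' h]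

lemma conj_eq (k : ℕ) (μ : ℕ → ℕ) (hμ : ∀ r s, 1 ≤ r → r ≤ s → s ≤ k → μ s ≤ μ r)
    (hk1 : μ (k + 1) = 0) (s j : ℕ) (hs1 : 1 ≤ s) (hsk : s ≤ k)
    (hj1 : μ (s + 1) < j) (hj2 : j ≤ μ s) : conj k μ j = s := by
  unfold conj
  have : (Finset.Icc 1 k).filter (fun r => j ≤ μ r) = Finset.Icc 1 s := by
    ext r
    simp only [Finset.mem_filter, Finset.mem_Icc]
    constructor
    · rintro ⟨⟨h1, h2⟩, h3⟩
      refine ⟨h1, ?_⟩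
      by_contra hc
      push_neg at hc
      have : μ r ≤ μ (s + 1) := by
        rcases Nat.lt_or_ge s k with hsk' | hsk'
        · exact hμ (s + 1) r (by omega) (by omega) h2
        · omega
      omega
    · rintro ⟨h1, h2⟩
      exact ⟨⟨h1, by omega⟩, le_trans hj2 (hμ r s h1 h2 hsk)⟩
  rw [this, Nat.card_Icc]
  omega

lemma row (θ c : ℝ) (k : ℕ) (μ : ℕ → ℕ)
    (hμ : ∀ r s, 1 ≤ r → r ≤ s → s ≤ k → μ s ≤ μ r) (hk1 : μ (k + 1) = 0) :
    Hgen θ c k μ = ∏ i ∈ Finset.Icc 1 k, ∏ s ∈ Finset.Icc i k,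
      poch (((s : ℝ) - i) * θ + ((μ i : ℝ) - (μ s : ℝ)) + c) (μ s - μ (s + 1)) := by
  unfold Hgen
  refine Finset.prod_congr rfl fun i hi => ?_
  simp only [Finset.mem_Icc] at hi
  have hIcc : Finset.Icc 1 (μ i) = Finset.Ioc (μ (k + 1)) (μ i) := by
    rw [hk1]
    ext x
    simp only [Finset.mem_Icc, Finset.mem_Ioc]
    omega
  rw [hIcc, ← prod_telescope _ μ i k hi.2
    (fun s hs hs' => by
      rcases Nat.lt_or_ge s k with h | h
      · exact hμ s (s + 1) (by omega) (by omega) (by omega)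
      · have : s = k := by omega
        subst this; omega)]
  refine Finset.prod_congr rfl fun s hs => ?_
  simp only [Finset.mem_Icc] at hs
  rw [prod_Ioc_reflect]
  unfold poch
  refine Finset.prod_congr rfl fun m hm => ?_
  simp only [Finset.mem_range] at hm
  have h1 : μ s ≤ μ i := hμ i s (by omega) hs.1 hs.2
  have hc : conj k μ (μ s - m) = s :=
    conj_eq k μ hμ hk1 s _ (by omega) hs.2 (by omega) (by omega)
  rw [hc]
  have e1 : (μ i - (μ s - m) : ℕ) = μ i - μ s + m := by omega
  rw [e1, Nat.cast_add, Nat.cast_sub h1, Nat.cast_sub hs.1]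
  ring

lemma poch_add (x : ℝ) (a b : ℕ) : poch x (a + b) = poch x a * poch (x + a) b := by
  unfold poch
  rw [Finset.prod_range_add]
  congr 1
  refine Finset.prod_congr rfl fun i _ => ?_
  push_cast; ring

lemma poch_one (x : ℝ) : poch x 1 = x := by simp [poch]

lemma poch_two (x : ℝ) : poch x 2 = x * (x + 1) := by
  rw [show (2:ℕ) = 1 + 1 from rfl, poch_add, poch_one, poch_one]
  norm_num

lemma poch_succ_left (x : ℝ) (n : ℕ) : poch x (n + 1) = x * poch (x + 1) n := by
  rw [add_comm n 1, poch_add, poch_one]; norm_num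

lemma poch_succ_right (x : ℝ) (n : ℕ) : poch x (n + 1) = poch x n * (x + n) := by
  simp [poch, Finset.prod_range_succ]

lemma poch_one_left (n : ℕ) : poch 1 n = Nat.factorial n := by
  induction n with
  | zero => simp [poch]
  | succ m ih => rw [poch_succ_right, ih, Nat.factorial_succ]; push_cast; ring

lemma prod_Icc_succ_bot (a b : ℕ) (h : a ≤ b) (f : ℕ → ℝ) :
    ∏ s ∈ Finset.Icc a b, f s = f a * ∏ s ∈ Finset.Icc (a + 1) b, f s := by
  rw [← Finset.Ico_add_one_right_eq_Icc, Finset.prod_eq_prod_Ico_succ_bot (by omega), Finset.Ico_add_one_right_eq_Icc]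

lemma prod_Icc_top (a b : ℕ) (h1 : 1 ≤ b) (h2 : a ≤ b) (f : ℕ → ℝ) :
    ∏ s ∈ Finset.Icc a b, f s = (∏ s ∈ Finset.Icc a (b - 1), f s) * f b := by
  obtain ⟨b', rfl⟩ : ∃ b', b = b' + 1 := ⟨b - 1, by omega⟩
  simp only [Nat.add_sub_cancel]
  exact Finset.prod_Icc_succ_top h2 f

lemma prod_Icc_shift (f : ℕ → ℝ) (a b : ℕ) :
    ∏ s ∈ Finset.Icc (a + 1) (b + 1), f s = ∏ t ∈ Finset.Icc a b, f (t + 1) := by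
  rw [← Finset.map_add_right_Icc a b 1, Finset.prod_map]
  rfl


lemma poch_pred (x : ℝ) (n : ℕ) (h : 1 ≤ n) :
    poch x n = poch x (n - 1) * (x + (n : ℝ) - 1) := by
  obtain ⟨m, rfl⟩ : ∃ m, n = m + 1 := ⟨n - 1, by omega⟩
  rw [poch_succ_right]
  simp only [Nat.add_sub_cancel]
  push_cast
  ring

lemma perRowA (θ : ℝ) (k : ℕ) (hk : 1 ≤ k) (μ : ℕ → ℕ)
    (hμ : ∀ r s, 1 ≤ r → r ≤ s → s ≤ k + 1 → μ s ≤ μ r)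
    (hpos : 1 ≤ μ k) (hμk1 : μ (k + 1) = 1)
    (i : ℕ) (hi1 : 1 ≤ i) (hik : i ≤ k) :
    (∏ s ∈ Finset.Icc i k,
        poch (((s : ℝ) - i) * θ + ((μ i : ℝ) - (μ s : ℝ)) + 1)
          (μ s - (if s + 1 ≤ k then μ (s + 1) else 0)))
      = (Nat.factorial (μ i - μ (i + 1)) : ℝ)
        * (∏ s ∈ Finset.Icc (i + 1) k,
            poch (((s : ℝ) - i) * θ + ((μ i : ℝ) - (μ s : ℝ)) + 1) (μ s - μ (s + 1)))
        * ((μ i : ℝ) + ((k : ℝ) - i) * θ) := by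
  have htop : poch (((k : ℝ) - i) * θ + ((μ i : ℝ) - (μ k : ℝ)) + 1)
      (μ k - (if k + 1 ≤ k then μ (k + 1) else 0))
      = poch (((k : ℝ) - i) * θ + ((μ i : ℝ) - (μ k : ℝ)) + 1) (μ k - μ (k + 1))
        * ((μ i : ℝ) + ((k : ℝ) - i) * θ) := by
    rw [if_neg (by omega), Nat.sub_zero, hμk1, poch_pred _ (μ k) hpos]
    congr 1
    ring
  rcases hik.lt_or_eq with hik' | hik'
  · -- i < k
    rw [prod_Icc_succ_bot i k hik]
    have hbot : poch (((i : ℝ) - i) * θ + ((μ i : ℝ) - (μ i : ℝ)) + 1)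
        (μ i - (if i + 1 ≤ k then μ (i + 1) else 0)) = (Nat.factorial (μ i - μ (i + 1)) : ℝ) := by
      rw [if_pos (by omega), show ((i : ℝ) - i) * θ + ((μ i : ℝ) - (μ i : ℝ)) + 1 = 1 by ring,
        poch_one_left]
    rw [hbot, prod_Icc_top (i + 1) k hk (by omega), htop]
    have hmid : ∀ s ∈ Finset.Icc (i + 1) (k - 1),
        poch (((s : ℝ) - i) * θ + ((μ i : ℝ) - (μ s : ℝ)) + 1)
          (μ s - (if s + 1 ≤ k then μ (s + 1) else 0))
        = poch (((s : ℝ) - i) * θ + ((μ i : ℝ) - (μ s : ℝ)) + 1) (μ s - μ (s + 1)) := by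
      intro s hs
      simp only [Finset.mem_Icc] at hs
      rw [if_pos (by omega)]
    rw [Finset.prod_congr rfl hmid]
    conv_rhs => rw [prod_Icc_top (i + 1) k hk (by omega)]
    ring
  · -- i = k
    subst hik'
    rw [Finset.Icc_self, Finset.prod_singleton, if_neg (by omega), Nat.sub_zero]
    rw [show ((i : ℝ) - i) * θ + ((μ i : ℝ) - (μ i : ℝ)) + 1 = 1 by ring, poch_one_left]
    rw [show Finset.Icc (i + 1) i = ∅ from by rw [Finset.Icc_eq_empty]; omega,
      Finset.prod_empty, hμk1]
    have hfac : (μ i : ℝ) * ((Nat.factorial (μ i - 1) : ℕ) : ℝ) = ((Nat.factorial (μ i) : ℕ) : ℝ) := by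
      exact_mod_cast congrArg (Nat.cast : ℕ → ℝ) (Nat.mul_factorial_pred (by omega))
    linear_combination -hfac

lemma perRowB (θ : ℝ) (k : ℕ) (μ : ℕ → ℕ)
    (hμk1 : μ (k + 1) = 1) (hμk2 : μ (k + 2) = 0)
    (i : ℕ) (hik : i ≤ k) :
    (∏ s ∈ Finset.Icc i (k + 1),
        poch (((s : ℝ) - i) * θ + ((μ i : ℝ) - (μ s : ℝ)) + θ) (μ s - μ (s + 1)))
      = (∏ s ∈ Finset.Icc i k,
          poch (((s : ℝ) - i) * θ + ((μ i : ℝ) - (μ s : ℝ)) + θ) (μ s - μ (s + 1)))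
        * ((μ i : ℝ) - 1 + ((k : ℝ) - i + 2) * θ) := by
  rw [Finset.prod_Icc_succ_top (show i ≤ k + 1 by omega)]
  congr 1
  rw [show k + 1 + 1 = k + 2 from rfl, hμk1, hμk2, Nat.sub_zero, poch_one]
  push_cast
  ring

lemma perRowN (θ : ℝ) (k : ℕ) (hk : 1 ≤ k) (μ : ℕ → ℕ)
    (hμ : ∀ r s, 1 ≤ r → r ≤ s → s ≤ k + 1 → μ s ≤ μ r)
    (hpos : 1 ≤ μ k) (hμk1 : μ (k + 1) = 1) (hμk2 : μ (k + 2) = 0)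
    (i : ℕ) (hi1 : 1 ≤ i) (hik : i ≤ k) :
    (∏ s ∈ Finset.Icc (i + 1) (k + 1),
        poch (((s : ℝ) - i) * θ + ((μ i : ℝ) - (μ (s - 1) : ℝ))) (μ (s - 1) - μ (s + 1) + 1))
      = (∏ s ∈ Finset.Icc i k,
          poch (((s : ℝ) - i) * θ + ((μ i : ℝ) - (μ s : ℝ)) + θ) (μ s - μ (s + 1)))
        * ((∏ s ∈ Finset.Icc (i + 1) k, (((s : ℝ) - i) * θ + ((μ i : ℝ) - (μ s : ℝ))))
          * (∏ s ∈ Finset.Icc (i + 1) k,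
              poch (((s : ℝ) - i) * θ + ((μ i : ℝ) - (μ s : ℝ)) + 1) (μ s - μ (s + 1)))
          * (((μ i : ℝ) + ((k : ℝ) - i + 1) * θ)
              * ((μ i : ℝ) - 1 + ((k : ℝ) - i + 1) * θ))) := by
  rw [prod_Icc_shift]
  simp only [Nat.add_sub_cancel]
  have hsplit : ∀ t ∈ Finset.Icc i k,
      poch ((((t + 1 : ℕ) : ℝ) - i) * θ + ((μ i : ℝ) - (μ t : ℝ))) (μ t - μ (t + 1 + 1) + 1)
      = poch (((t : ℝ) - i) * θ + ((μ i : ℝ) - (μ t : ℝ)) + θ) (μ t - μ (t + 1))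
        * poch ((((t + 1 : ℕ) : ℝ) - i) * θ + ((μ i : ℝ) - (μ (t + 1) : ℝ)))
            (μ (t + 1) - μ (t + 1 + 1) + 1) := by
    intro t ht
    simp only [Finset.mem_Icc] at ht
    have h1 : μ (t + 1) ≤ μ t := hμ t (t + 1) (by omega) (by omega) (by omega)
    have h2 : μ (t + 1 + 1) ≤ μ (t + 1) := by
      rcases Nat.lt_or_ge (t + 1) (k + 1) with h | h
      · exact hμ (t + 1) (t + 1 + 1) (by omega) (by omega) (by omega)
      · rw [show t + 1 + 1 = k + 2 by omega, hμk2]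
        omega
    have hlen : μ t - μ (t + 1 + 1) + 1 = (μ t - μ (t + 1)) + ((μ (t + 1) - μ (t + 1 + 1)) + 1) := by
      omega
    rw [hlen, poch_add]
    congr 1
    · congr 1
      push_cast
      ring
    · congr 1
      push_cast [Nat.cast_sub h1]
      ring
  rw [Finset.prod_congr rfl hsplit, Finset.prod_mul_distrib]
  congr 1
  rw [← prod_Icc_shift (fun s =>
      poch (((s : ℝ) - i) * θ + ((μ i : ℝ) - (μ s : ℝ))) (μ s - μ (s + 1) + 1)) i k]
  rw [Finset.prod_Icc_succ_top (show i + 1 ≤ k + 1 by omega)]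
  have htop : poch ((((k + 1 : ℕ) : ℝ) - i) * θ + ((μ i : ℝ) - (μ (k + 1) : ℝ)))
      (μ (k + 1) - μ (k + 1 + 1) + 1)
      = ((μ i : ℝ) + ((k : ℝ) - i + 1) * θ) * ((μ i : ℝ) - 1 + ((k : ℝ) - i + 1) * θ) := by
    rw [show k + 1 + 1 = k + 2 from rfl, hμk1, hμk2, show (1 : ℕ) - 0 + 1 = 2 from rfl, poch_two]
    push_cast
    ring
  rw [htop]
  have hDfa : ∀ s ∈ Finset.Icc (i + 1) k,
      poch (((s : ℝ) - i) * θ + ((μ i : ℝ) - (μ s : ℝ))) (μ s - μ (s + 1) + 1)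
      = (((s : ℝ) - i) * θ + ((μ i : ℝ) - (μ s : ℝ)))
        * poch (((s : ℝ) - i) * θ + ((μ i : ℝ) - (μ s : ℝ)) + 1) (μ s - μ (s + 1)) := by
    intro s hs
    exact poch_succ_left _ _
  rw [Finset.prod_congr rfl hDfa, Finset.prod_mul_distrib]

lemma perRow (θ : ℝ) (k : ℕ) (hk : 1 ≤ k) (μ : ℕ → ℕ)
    (hμ : ∀ r s, 1 ≤ r → r ≤ s → s ≤ k + 1 → μ s ≤ μ r)
    (hpos : 1 ≤ μ k) (hμk1 : μ (k + 1) = 1) (hμk2 : μ (k + 2) = 0)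
    (i : ℕ) (hi1 : 1 ≤ i) (hik : i ≤ k) :
    (∏ s ∈ Finset.Icc i k,
        poch (((s : ℝ) - i) * θ + ((μ i : ℝ) - (μ s : ℝ)) + 1)
          (μ s - (if s + 1 ≤ k then μ (s + 1) else 0)))
    * (∏ s ∈ Finset.Icc i (k + 1),
        poch (((s : ℝ) - i) * θ + ((μ i : ℝ) - (μ s : ℝ)) + θ) (μ s - μ (s + 1)))
    * (∏ s ∈ Finset.Icc (i + 1) k, (((s : ℝ) - i) * θ + ((μ i : ℝ) - (μ s : ℝ))))
    * (((μ i : ℝ) + ((k : ℝ) - i + 1) * θ) * ((μ i : ℝ) - 1 + ((k : ℝ) - i + 1) * θ))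
    = (Nat.factorial (μ i - μ (i + 1)) : ℝ)
    * (∏ s ∈ Finset.Icc (i + 1) (k + 1),
        poch (((s : ℝ) - i) * θ + ((μ i : ℝ) - (μ (s - 1) : ℝ))) (μ (s - 1) - μ (s + 1) + 1))
    * (((μ i : ℝ) - 1 + ((k : ℝ) - i + 2) * θ) * ((μ i : ℝ) + ((k : ℝ) - i) * θ)) := by
  rw [perRowA θ k hk μ hμ hpos hμk1 i hi1 hik, perRowB θ k μ hμk1 hμk2 i hik,
    perRowN θ k hk μ hμ hpos hμk1 hμk2 i hi1 hik]
  ring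

theorem stmt19 (θ : ℝ) (hθ : 0 < θ) (k : ℕ) (hk : 1 ≤ k) (μ : ℕ → ℕ)
    (hdec : ∀ i, 1 ≤ i → i < k → μ (i + 1) ≤ μ i)
    (hpos : 1 ≤ μ k)
    (hμk1 : μ (k + 1) = 1)
    (hconv : ∀ r, k + 2 ≤ r → μ r = 0) :
    -- `H_θ(μ) · H'_θ(λ)`, where `λ = (μ₁, …, μ_k, 1)` is described by `μ`
    -- itself on indices `1, …, k+1` thanks to `μ_{k+1} = 1`
    Hgen θ 1 k μ * Hgen θ θ (k + 1) μ
      = (θ * (∏ i ∈ Finset.Icc 1 k, (Nat.factorial (μ i - μ (i + 1)) : ℝ)) *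
            (∏ i ∈ Finset.Icc 1 k, ∏ s ∈ Finset.Icc (i + 1) (k + 1),
              poch (((s : ℝ) - i) * θ + ((μ i : ℝ) - (μ (s - 1) : ℝ)))
                (μ (s - 1) - μ (s + 1) + 1)) /
            ∏ i ∈ Finset.Icc 1 k, ∏ s ∈ Finset.Icc (i + 1) k,
              (((s : ℝ) - i) * θ + ((μ i : ℝ) - (μ s : ℝ)))) *
        ∏ i ∈ Finset.Icc 1 k,
          (((μ i : ℝ) - 1 + ((k : ℝ) - i + 2) * θ) * ((μ i : ℝ) + ((k : ℝ) - i) * θ)) /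
            (((μ i : ℝ) + ((k : ℝ) - i + 1) * θ) * ((μ i : ℝ) - 1 + ((k : ℝ) - i + 1) * θ)) := by
  have hstep : ∀ t, 1 ≤ t → t < k + 1 → μ (t + 1) ≤ μ t := by
    intro t h1 h2
    rcases Nat.lt_or_ge t k with h | h
    · exact hdec t h1 h
    · have e : t = k := by omega
      rw [e, hμk1]
      exact hpos
  have hμmono : ∀ r s, 1 ≤ r → r ≤ s → s ≤ k + 1 → μ s ≤ μ r :=
    fun r s h1 h2 h3 => nu_chain μ r s h2 (fun t ht ht' => hstep t (by omega) (by omega))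
  have hμk2 : μ (k + 2) = 0 := hconv (k + 2) le_rfl
  set μ' : ℕ → ℕ := fun r => if r ≤ k then μ r else 0 with hμ'def
  have hH : Hgen θ 1 k μ = ∏ i ∈ Finset.Icc 1 k, ∏ s ∈ Finset.Icc i k,
      poch (((s : ℝ) - i) * θ + ((μ i : ℝ) - (μ s : ℝ)) + 1)
        (μ s - (if s + 1 ≤ k then μ (s + 1) else 0)) := by
    rw [Hgen_congr θ 1 k μ μ' (fun r h1 h2 => by simp [hμ'def, h2])]
    rw [row θ 1 k μ'
      (fun r s h1 h2 h3 => by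
        simp only [hμ'def]
        rw [if_pos h3, if_pos (show r ≤ k by omega)]
        exact hμmono r s h1 h2 (by omega))
      (by simp [hμ'def])]
    refine Finset.prod_congr rfl fun i hi => Finset.prod_congr rfl fun s hs => ?_
    simp only [Finset.mem_Icc] at hi hs
    simp only [hμ'def]
    rw [if_pos (show i ≤ k by omega), if_pos (show s ≤ k from hs.2)]
  have hH' : Hgen θ θ (k + 1) μ = (∏ i ∈ Finset.Icc 1 k, ∏ s ∈ Finset.Icc i (k + 1),
      poch (((s : ℝ) - i) * θ + ((μ i : ℝ) - (μ s : ℝ)) + θ) (μ s - μ (s + 1))) * θ := by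
    rw [row θ θ (k + 1) μ (fun r s h1 h2 h3 => hμmono r s h1 h2 h3)
      (by rw [show k + 1 + 1 = k + 2 from by omega]; exact hμk2)]
    rw [Finset.prod_Icc_succ_top (show 1 ≤ k + 1 by omega)]
    congr 1
    rw [Finset.Icc_self, Finset.prod_singleton,
      show k + 1 + 1 = k + 2 from by omega, hμk1, hμk2,
      show (1 : ℕ) - 0 = 1 from rfl, poch_one]
    push_cast
    ring
  rw [hH, hH', Finset.prod_div_distrib, div_mul_div_comm]
  have hD : (∏ i ∈ Finset.Icc 1 k, ∏ s ∈ Finset.Icc (i + 1) k,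
      (((s : ℝ) - i) * θ + ((μ i : ℝ) - (μ s : ℝ)))) ≠ 0 := by
    rw [Finset.prod_ne_zero_iff]
    intro i hi
    rw [Finset.prod_ne_zero_iff]
    intro s hs
    simp only [Finset.mem_Icc] at hi hs
    have h1 : (i : ℝ) + 1 ≤ (s : ℝ) := by exact_mod_cast hs.1
    have h2 : (μ s : ℝ) ≤ (μ i : ℝ) := by
      exact_mod_cast hμmono i s hi.1 (by omega) (by omega)
    have : 0 < ((s : ℝ) - i) * θ + ((μ i : ℝ) - (μ s : ℝ)) := by nlinarith
    exact ne_of_gt this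
  have hCd : (∏ i ∈ Finset.Icc 1 k,
      (((μ i : ℝ) + ((k : ℝ) - i + 1) * θ) * ((μ i : ℝ) - 1 + ((k : ℝ) - i + 1) * θ))) ≠ 0 := by
    rw [Finset.prod_ne_zero_iff]
    intro i hi
    simp only [Finset.mem_Icc] at hi
    have h1 : (1 : ℝ) ≤ (μ i : ℝ) := by
      exact_mod_cast le_trans hpos (hμmono i k hi.1 hi.2 (by omega))
    have h2 : (i : ℝ) ≤ (k : ℝ) := by exact_mod_cast hi.2
    apply mul_ne_zero
    · have : 0 < (μ i : ℝ) + ((k : ℝ) - i + 1) * θ := by nlinarith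
      exact ne_of_gt this
    · have : 0 < (μ i : ℝ) - 1 + ((k : ℝ) - i + 1) * θ := by nlinarith
      exact ne_of_gt this
  rw [eq_div_iff (mul_ne_zero hD hCd)]
  have key : (∏ i ∈ Finset.Icc 1 k,
      ((∏ s ∈ Finset.Icc i k,
          poch (((s : ℝ) - i) * θ + ((μ i : ℝ) - (μ s : ℝ)) + 1)
            (μ s - (if s + 1 ≤ k then μ (s + 1) else 0)))
        * (∏ s ∈ Finset.Icc i (k + 1),
            poch (((s : ℝ) - i) * θ + ((μ i : ℝ) - (μ s : ℝ)) + θ) (μ s - μ (s + 1)))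
        * (∏ s ∈ Finset.Icc (i + 1) k, (((s : ℝ) - i) * θ + ((μ i : ℝ) - (μ s : ℝ))))
        * (((μ i : ℝ) + ((k : ℝ) - i + 1) * θ) * ((μ i : ℝ) - 1 + ((k : ℝ) - i + 1) * θ))))
      = ∏ i ∈ Finset.Icc 1 k,
        ((Nat.factorial (μ i - μ (i + 1)) : ℝ)
          * (∏ s ∈ Finset.Icc (i + 1) (k + 1),
              poch (((s : ℝ) - i) * θ + ((μ i : ℝ) - (μ (s - 1) : ℝ)))
                (μ (s - 1) - μ (s + 1) + 1))
          * (((μ i : ℝ) - 1 + ((k : ℝ) - i + 2) * θ) * ((μ i : ℝ) + ((k : ℝ) - i) * θ))) := by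
    refine Finset.prod_congr rfl fun i hi => ?_
    simp only [Finset.mem_Icc] at hi
    exact perRow θ k hk μ hμmono hpos hμk1 hμk2 i hi.1 hi.2
  simp only [Finset.prod_mul_distrib] at key ⊢
  linear_combination θ * key
end
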